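/- arXiv:1502.05238 — 2 statements merged into one kernel-verified Lean document; each statement's English description precedes it below -/
import Mathlib

section
/- For every collection a : Fin n → [0,1]² (n ≥ 1), every k ≥ 1, and every 0 < δ ≤ 1, the game Γ_{SA_δ} played over the collection k-UN(A) (whose alternatives are indexed by the multisets of size k of Fin n, the utility vector of a multiset being the average of a over it) admits a pure Nash equilibrium, and every pure Nash equilibrium outcome (o₁, o₂) is (δ + 1/k)-close to the Pareto frontier of A: there is no y in the convex hull of {a^j : j ∈ Fin n} with y_1 > o₁ + δ + 1/k and y_2 > o₂ + δ + 1/k. -/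
open Finset

attribute [local instance] Classical.propDecidable

/-- Average of the alternatives over a finite set of indices. -/
noncomputable def avg {ι : Type*} [Fintype ι] (a : ι → ℝ × ℝ) (S : Finset ι) : ℝ × ℝ :=
  (S.card : ℝ)⁻¹ • ∑ k ∈ S, a k

/-- The expected pair of payoffs in the satisfactory-alternatives mechanism `SA_δ`
when the players submit the sets `L₁`, `L₂`. -/
noncomputable def SAout {ι : Type*} [Fintype ι] (a : ι → ℝ × ℝ) (δ : ℝ)
    (L₁ L₂ : Finset ι) : ℝ × ℝ :=
  if L₁ ∩ L₂ = ∅ then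
    (if L₁ ∪ L₂ = ∅ then avg a Finset.univ else avg a (L₁ ∪ L₂))
  else (1 - δ) • avg a (L₁ ∩ L₂) + δ • avg a (L₁ ∪ L₂)

/-- `(L₁, L₂)` is a pure Nash equilibrium of the game `Γ_{SA_δ}(A)`. -/
def IsPureNE {ι : Type*} [Fintype ι] (a : ι → ℝ × ℝ) (δ : ℝ) (L₁ L₂ : Finset ι) : Prop :=
  (∀ L₁' : Finset ι, (SAout a δ L₁' L₂).1 ≤ (SAout a δ L₁ L₂).1) ∧
  (∀ L₂' : Finset ι, (SAout a δ L₁ L₂').2 ≤ (SAout a δ L₁ L₂).2)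

/-- The collection `k-UN(A)`, indexed by multisets of size `k` of indices; the
alternative of a multiset is the average of `a` over it. -/
noncomputable def kUNColl {n : ℕ} (a : Fin n → ℝ × ℝ) (k : ℕ) :
    Sym (Fin n) k → ℝ × ℝ :=
  fun m => (k : ℝ)⁻¹ • (Multiset.map a m.toMultiset).sum

section Helpers

variable {ι : Type*} [Fintype ι] (b : ι → ℝ × ℝ)

lemma avg_fst (S : Finset ι) : (avg b S).1 = (S.card : ℝ)⁻¹ * ∑ m ∈ S, (b m).1 := by
  simp [avg, Prod.fst_sum]

lemma avg_snd (S : Finset ι) : (avg b S).2 = (S.card : ℝ)⁻¹ * ∑ m ∈ S, (b m).2 := by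
  simp [avg, Prod.snd_sum]

lemma avg_singleton (m : ι) : avg b {m} = b m := by
  simp [avg]

lemma sum_fst_eq (S : Finset ι) (hS : S.Nonempty) :
    ∑ m ∈ S, (b m).1 = (avg b S).1 * S.card := by
  rw [avg_fst]
  have : (S.card : ℝ) ≠ 0 := by
    simpa using hS.card_pos.ne'
  field_simp

lemma sum_snd_eq (S : Finset ι) (hS : S.Nonempty) :
    ∑ m ∈ S, (b m).2 = (avg b S).2 * S.card := by
  rw [avg_snd]
  have : (S.card : ℝ) ≠ 0 := by
    simpa using hS.card_pos.ne'
  field_simp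

/-- average with pointwise upper bound -/
lemma avg_fst_le (S : Finset ι) (c : ℝ) (hc : 0 ≤ c ∨ S.Nonempty)
    (h : ∀ m ∈ S, (b m).1 ≤ c) : (avg b S).1 ≤ c := by
  rcases S.eq_empty_or_nonempty with rfl | hS
  · rcases hc with hc | hc
    · simpa [avg] using hc
    · exact absurd rfl hc.ne_empty
  · have hpos : (0:ℝ) < S.card := by exact_mod_cast hS.card_pos
    rw [avg_fst]
    rw [inv_mul_le_iff₀ hpos]
    calc ∑ m ∈ S, (b m).1 ≤ ∑ m ∈ S, c := Finset.sum_le_sum h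
      _ = (S.card : ℝ) * c := by rw [Finset.sum_const, nsmul_eq_mul]

lemma avg_snd_le (S : Finset ι) (c : ℝ) (hc : 0 ≤ c ∨ S.Nonempty)
    (h : ∀ m ∈ S, (b m).2 ≤ c) : (avg b S).2 ≤ c := by
  rcases S.eq_empty_or_nonempty with rfl | hS
  · rcases hc with hc | hc
    · simpa [avg] using hc
    · exact absurd rfl hc.ne_empty
  · have hpos : (0:ℝ) < S.card := by exact_mod_cast hS.card_pos
    rw [avg_snd]
    rw [inv_mul_le_iff₀ hpos]
    calc ∑ m ∈ S, (b m).2 ≤ ∑ m ∈ S, c := Finset.sum_le_sum h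
      _ = (S.card : ℝ) * c := by rw [Finset.sum_const, nsmul_eq_mul]

lemma avg_fst_nonneg (S : Finset ι) (h : ∀ m, 0 ≤ (b m).1) : 0 ≤ (avg b S).1 := by
  rw [avg_fst]
  exact mul_nonneg (by positivity) (Finset.sum_nonneg fun m _ => h m)

lemma avg_snd_nonneg (S : Finset ι) (h : ∀ m, 0 ≤ (b m).2) : 0 ≤ (avg b S).2 := by
  rw [avg_snd]
  exact mul_nonneg (by positivity) (Finset.sum_nonneg fun m _ => h m)

/-- Key comparison lemma: if the elements of `V` outside `W` are below the
`W`-average and the elements of `W` outside `V` are above it, then the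
`V`-average is below the `W`-average. -/
lemma key_sum (f : ι → ℝ) (W V : Finset ι) (c : ℝ)
    (hW : ∑ m ∈ W, f m = c * W.card)
    (h1 : ∀ m ∈ V, m ∉ W → f m ≤ c)
    (h2 : ∀ m ∈ W, m ∉ V → c ≤ f m) :
    ∑ m ∈ V, f m ≤ c * V.card := by
  classical
  have eV : ∑ m ∈ V ∩ W, f m + ∑ m ∈ V \ W, f m = ∑ m ∈ V, f m :=
    Finset.sum_inter_add_sum_sdiff V W f
  have eW : ∑ m ∈ W ∩ V, f m + ∑ m ∈ W \ V, f m = ∑ m ∈ W, f m :=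
    Finset.sum_inter_add_sum_sdiff W V f
  have cV : (V ∩ W).card + (V \ W).card = V.card := Finset.card_inter_add_card_sdiff V W
  have cW : (W ∩ V).card + (W \ V).card = W.card := Finset.card_inter_add_card_sdiff W V
  have hVW : ∑ m ∈ V \ W, f m ≤ c * (V \ W).card := by
    calc ∑ m ∈ V \ W, f m ≤ ∑ _m ∈ V \ W, c := by
          refine Finset.sum_le_sum fun m hm => ?_
          rw [Finset.mem_sdiff] at hm
          exact h1 m hm.1 hm.2
      _ = c * (V \ W).card := by rw [Finset.sum_const, nsmul_eq_mul]; ring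
  have hWV : c * (W \ V).card ≤ ∑ m ∈ W \ V, f m := by
    calc (c * (W \ V).card : ℝ) = ∑ _m ∈ W \ V, c := by rw [Finset.sum_const, nsmul_eq_mul]; ring
      _ ≤ ∑ m ∈ W \ V, f m := by
          refine Finset.sum_le_sum fun m hm => ?_
          rw [Finset.mem_sdiff] at hm
          exact h2 m hm.1 hm.2
  have hinter : W ∩ V = V ∩ W := Finset.inter_comm W V
  rw [hinter] at eW cW
  have c1 : ((V ∩ W).card : ℝ) + ((V \ W).card : ℝ) = (V.card : ℝ) := by exact_mod_cast cV
  have c2 : ((V ∩ W).card : ℝ) + ((W \ V).card : ℝ) = (W.card : ℝ) := by exact_mod_cast cW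
  have e3 : c * (V.card : ℝ) = c * ((V ∩ W).card : ℝ) + c * ((V \ W).card : ℝ) := by
    rw [← c1]; ring
  have e4 : c * (W.card : ℝ) = c * ((V ∩ W).card : ℝ) + c * ((W \ V).card : ℝ) := by
    rw [← c2]; ring
  linarith [eV, eW, hVW, hWV]

lemma key_avg (W V : Finset ι) (hWne : W.Nonempty) (hVne : V.Nonempty)
    (h1 : ∀ m ∈ V, m ∉ W → (b m).1 ≤ (avg b W).1)
    (h2 : ∀ m ∈ W, m ∉ V → (avg b W).1 ≤ (b m).1) :
    (avg b V).1 ≤ (avg b W).1 := by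
  have hsum := key_sum (fun m => (b m).1) W V ((avg b W).1) (sum_fst_eq b W hWne) h1 h2
  have hpos : (0:ℝ) < V.card := by exact_mod_cast hVne.card_pos
  rw [avg_fst, inv_mul_le_iff₀ hpos]
  simpa [mul_comm] using hsum

end Helpers

set_option linter.unusedSectionVars false

section SAoutLemmas

variable {ι : Type*} [Fintype ι] (b : ι → ℝ × ℝ) (δ : ℝ)

lemma SAout_inter {L₁ L₂ : Finset ι} (h : (L₁ ∩ L₂).Nonempty) :
    SAout b δ L₁ L₂ = (1 - δ) • avg b (L₁ ∩ L₂) + δ • avg b (L₁ ∪ L₂) := by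
  rw [SAout, if_neg h.ne_empty]

lemma SAout_disj {L₁ L₂ : Finset ι} (h : L₁ ∩ L₂ = ∅) (h2 : (L₁ ∪ L₂).Nonempty) :
    SAout b δ L₁ L₂ = avg b (L₁ ∪ L₂) := by
  rw [SAout, if_pos h, if_neg h2.ne_empty]

lemma blend_fst (x y : ℝ × ℝ) : ((1 - δ) • x + δ • y).1 = (1 - δ) * x.1 + δ * y.1 := by
  simp [Prod.fst_add, Prod.smul_fst]

lemma blend_snd (x y : ℝ × ℝ) : ((1 - δ) • x + δ • y).2 = (1 - δ) * x.2 + δ * y.2 := by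
  simp [Prod.snd_add, Prod.smul_snd]

lemma avg_swap_fst (S : Finset ι) : (avg (Prod.swap ∘ b) S).1 = (avg b S).2 := by
  simp [avg_fst, avg_snd, Prod.swap]

lemma avg_swap_snd (S : Finset ι) : (avg (Prod.swap ∘ b) S).2 = (avg b S).1 := by
  simp [avg_fst, avg_snd, Prod.swap]

lemma SAout_swap_fst (L₁ L₂ : Finset ι) :
    (SAout (Prod.swap ∘ b) δ L₂ L₁).1 = (SAout b δ L₁ L₂).2 := by
  rw [SAout, SAout, Finset.inter_comm L₂ L₁, Finset.union_comm L₂ L₁]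
  split_ifs with h1 h2
  · rw [avg_swap_fst]
  · rw [avg_swap_fst]
  · rw [Prod.fst_add, Prod.snd_add, Prod.smul_fst, Prod.smul_snd, Prod.smul_fst,
      Prod.smul_snd, avg_swap_fst, avg_swap_fst]

lemma SAout_fst_nonneg (hb : ∀ m, 0 ≤ (b m).1) (hδ0 : 0 ≤ δ) (hδ1 : δ ≤ 1)
    (L₁ L₂ : Finset ι) : 0 ≤ (SAout b δ L₁ L₂).1 := by
  rw [SAout]
  split_ifs
  · exact avg_fst_nonneg b _ hb
  · exact avg_fst_nonneg b _ hb
  · rw [blend_fst]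
    have := avg_fst_nonneg b (L₁ ∩ L₂) hb
    have := avg_fst_nonneg b (L₁ ∪ L₂) hb
    nlinarith

lemma SAout_snd_nonneg (hb : ∀ m, 0 ≤ (b m).2) (hδ0 : 0 ≤ δ) (hδ1 : δ ≤ 1)
    (L₁ L₂ : Finset ι) : 0 ≤ (SAout b δ L₁ L₂).2 := by
  rw [SAout]
  split_ifs
  · exact avg_snd_nonneg b _ hb
  · exact avg_snd_nonneg b _ hb
  · rw [blend_snd]
    have := avg_snd_nonneg b (L₁ ∩ L₂) hb
    have := avg_snd_nonneg b (L₁ ∪ L₂) hb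
    nlinarith

end SAoutLemmas

section HalfLemmas

variable {ι : Type*} [Fintype ι] (b : ι → ℝ × ℝ) (δ : ℝ)

/-- Player 1 cannot improve, "intersecting" equilibrium shape. -/
lemma half_inter (hδ0 : 0 ≤ δ) (hδ1 : δ ≤ 1) (L₁ L₂ : Finset ι)
    (hI : (L₁ ∩ L₂).Nonempty)
    (h1 : ∀ m ∈ L₂, (b m).1 ≤ (avg b (L₁ ∩ L₂)).1)
    (h2 : ∀ m ∈ L₁, m ∉ L₂ → (avg b (L₁ ∪ L₂)).1 ≤ (b m).1)
    (h3 : ∀ m, m ∉ L₁ → m ∉ L₂ → (b m).1 ≤ (avg b (L₁ ∪ L₂)).1)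
    (h4 : (avg b (L₁ ∪ L₂)).1 ≤ (avg b (L₁ ∩ L₂)).1) :
    ∀ L₁' : Finset ι, (SAout b δ L₁' L₂).1 ≤ (SAout b δ L₁ L₂).1 := by
  have hL2 : L₂.Nonempty := hI.mono (Finset.inter_subset_right)
  have hUne : (L₁ ∪ L₂).Nonempty := hL2.mono Finset.subset_union_right
  have hRHS : (SAout b δ L₁ L₂).1
      = (1 - δ) * (avg b (L₁ ∩ L₂)).1 + δ * (avg b (L₁ ∪ L₂)).1 := by
    rw [SAout_inter b δ hI, blend_fst]
  -- union average bound for any deviation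
  have hUb : ∀ L₁' : Finset ι, (avg b (L₁' ∪ L₂)).1 ≤ (avg b (L₁ ∪ L₂)).1 := by
    intro L₁'
    refine key_avg b (L₁ ∪ L₂) (L₁' ∪ L₂) hUne (hL2.mono Finset.subset_union_right) ?_ ?_
    · intro m hm hmn
      rw [Finset.mem_union] at hmn
      push_neg at hmn
      exact h3 m hmn.1 hmn.2
    · intro m hm hmn
      rw [Finset.mem_union] at hm
      have hm2 : m ∉ L₂ := fun h => hmn (Finset.mem_union_right _ h)
      exact h2 m (hm.resolve_right (fun h => hm2 h)) hm2
  intro L₁'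
  by_cases hc : (L₁' ∩ L₂) = ∅
  · have hUne' : (L₁' ∪ L₂).Nonempty := hL2.mono Finset.subset_union_right
    rw [SAout_disj b δ hc hUne', hRHS]
    have := hUb L₁'
    nlinarith
  · have hcne : (L₁' ∩ L₂).Nonempty := Finset.nonempty_of_ne_empty hc
    rw [SAout_inter b δ hcne, blend_fst, hRHS]
    have hi : (avg b (L₁' ∩ L₂)).1 ≤ (avg b (L₁ ∩ L₂)).1 := by
      refine avg_fst_le b _ _ (Or.inr hcne) ?_
      intro m hm
      exact h1 m (Finset.mem_of_mem_inter_right hm)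
    have hu := hUb L₁'
    nlinarith

/-- Player 1 cannot improve, "disjoint" equilibrium shape. -/
lemma half_disj (hδ0 : 0 ≤ δ) (hδ1 : δ ≤ 1) (L₁ L₂ : Finset ι)
    (hd : L₁ ∩ L₂ = ∅) (hne2 : L₂.Nonempty)
    (h1 : ∀ m ∈ L₂, (b m).1 ≤ (avg b (L₁ ∪ L₂)).1)
    (h2 : ∀ m ∈ L₁, (avg b (L₁ ∪ L₂)).1 ≤ (b m).1)
    (h3 : ∀ m, m ∉ L₁ → m ∉ L₂ → (b m).1 ≤ (avg b (L₁ ∪ L₂)).1) :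
    ∀ L₁' : Finset ι, (SAout b δ L₁' L₂).1 ≤ (SAout b δ L₁ L₂).1 := by
  have hUne : (L₁ ∪ L₂).Nonempty := hne2.mono Finset.subset_union_right
  have hRHS : (SAout b δ L₁ L₂).1 = (avg b (L₁ ∪ L₂)).1 := by
    rw [SAout_disj b δ hd hUne]
  have hUb : ∀ L₁' : Finset ι, (avg b (L₁' ∪ L₂)).1 ≤ (avg b (L₁ ∪ L₂)).1 := by
    intro L₁'
    refine key_avg b (L₁ ∪ L₂) (L₁' ∪ L₂) hUne (hne2.mono Finset.subset_union_right) ?_ ?_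
    · intro m hm hmn
      rw [Finset.mem_union] at hmn
      push_neg at hmn
      exact h3 m hmn.1 hmn.2
    · intro m hm hmn
      rw [Finset.mem_union] at hm
      have hm2 : m ∉ L₂ := fun h => hmn (Finset.mem_union_right _ h)
      exact h2 m (hm.resolve_right (fun h => hm2 h))
  intro L₁'
  by_cases hc : (L₁' ∩ L₂) = ∅
  · have hUne' : (L₁' ∪ L₂).Nonempty := hne2.mono Finset.subset_union_right
    rw [SAout_disj b δ hc hUne', hRHS]
    exact hUb L₁'
  · have hcne : (L₁' ∩ L₂).Nonempty := Finset.nonempty_of_ne_empty hc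
    rw [SAout_inter b δ hcne, blend_fst, hRHS]
    have hi : (avg b (L₁' ∩ L₂)).1 ≤ (avg b (L₁ ∪ L₂)).1 := by
      refine avg_fst_le b _ _ (Or.inr hcne) ?_
      intro m hm
      exact h1 m (Finset.mem_of_mem_inter_right hm)
    have hu := hUb L₁'
    nlinarith

/-- Sufficient conditions for an "intersecting" pure Nash equilibrium. -/
lemma NE_inter (hδ0 : 0 ≤ δ) (hδ1 : δ ≤ 1) (L₁ L₂ : Finset ι)
    (hI : (L₁ ∩ L₂).Nonempty)
    (h1 : ∀ m ∈ L₂, (b m).1 ≤ (avg b (L₁ ∩ L₂)).1)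
    (h2 : ∀ m ∈ L₁, m ∉ L₂ → (avg b (L₁ ∪ L₂)).1 ≤ (b m).1)
    (h3 : ∀ m, m ∉ L₁ → m ∉ L₂ → (b m).1 ≤ (avg b (L₁ ∪ L₂)).1)
    (h4 : (avg b (L₁ ∪ L₂)).1 ≤ (avg b (L₁ ∩ L₂)).1)
    (h1' : ∀ m ∈ L₁, (b m).2 ≤ (avg b (L₁ ∩ L₂)).2)
    (h2' : ∀ m ∈ L₂, m ∉ L₁ → (avg b (L₁ ∪ L₂)).2 ≤ (b m).2)
    (h3' : ∀ m, m ∉ L₁ → m ∉ L₂ → (b m).2 ≤ (avg b (L₁ ∪ L₂)).2)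
    (h4' : (avg b (L₁ ∪ L₂)).2 ≤ (avg b (L₁ ∩ L₂)).2) :
    IsPureNE b δ L₁ L₂ := by
  constructor
  · exact half_inter b δ hδ0 hδ1 L₁ L₂ hI h1 h2 h3 h4
  · intro L₂'
    rw [← SAout_swap_fst b δ L₁ L₂', ← SAout_swap_fst b δ L₁ L₂]
    have hI' : (L₂ ∩ L₁).Nonempty := by rwa [Finset.inter_comm]
    refine half_inter (Prod.swap ∘ b) δ hδ0 hδ1 L₂ L₁ hI' ?_ ?_ ?_ ?_ L₂'
    · intro m hm
      rw [Finset.inter_comm L₂ L₁, avg_swap_fst]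
      exact h1' m hm
    · intro m hm hmn
      rw [Finset.union_comm L₂ L₁, avg_swap_fst]
      exact h2' m hm hmn
    · intro m hm hmn
      rw [Finset.union_comm L₂ L₁, avg_swap_fst]
      exact h3' m hmn hm
    · rw [Finset.inter_comm L₂ L₁, Finset.union_comm L₂ L₁, avg_swap_fst, avg_swap_fst]
      exact h4'

/-- Sufficient conditions for a "disjoint" pure Nash equilibrium. -/
lemma NE_disj (hδ0 : 0 ≤ δ) (hδ1 : δ ≤ 1) (L₁ L₂ : Finset ι)
    (hd : L₁ ∩ L₂ = ∅) (hne1 : L₁.Nonempty) (hne2 : L₂.Nonempty)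
    (h1 : ∀ m ∈ L₂, (b m).1 ≤ (avg b (L₁ ∪ L₂)).1)
    (h2 : ∀ m ∈ L₁, (avg b (L₁ ∪ L₂)).1 ≤ (b m).1)
    (h3 : ∀ m, m ∉ L₁ → m ∉ L₂ → (b m).1 ≤ (avg b (L₁ ∪ L₂)).1)
    (h1' : ∀ m ∈ L₁, (b m).2 ≤ (avg b (L₁ ∪ L₂)).2)
    (h2' : ∀ m ∈ L₂, (avg b (L₁ ∪ L₂)).2 ≤ (b m).2)
    (h3' : ∀ m, m ∉ L₁ → m ∉ L₂ → (b m).2 ≤ (avg b (L₁ ∪ L₂)).2) :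
    IsPureNE b δ L₁ L₂ := by
  constructor
  · exact half_disj b δ hδ0 hδ1 L₁ L₂ hd hne2 h1 h2 h3
  · intro L₂'
    rw [← SAout_swap_fst b δ L₁ L₂', ← SAout_swap_fst b δ L₁ L₂]
    have hd' : L₂ ∩ L₁ = ∅ := by rwa [Finset.inter_comm]
    refine half_disj (Prod.swap ∘ b) δ hδ0 hδ1 L₂ L₁ hd' hne1 ?_ ?_ ?_ L₂'
    · intro m hm
      rw [Finset.union_comm L₂ L₁, avg_swap_fst]
      exact h1' m hm
    · intro m hm
      rw [Finset.union_comm L₂ L₁, avg_swap_fst]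
      exact h2' m hm
    · intro m hm hmn
      rw [Finset.union_comm L₂ L₁, avg_swap_fst]
      exact h3' m hmn hm

end HalfLemmas

section Existence

variable {ι : Type*} [Fintype ι]

lemma exists_NE_core (b : ι → ℝ × ℝ) (δ : ℝ) (hδ0 : 0 ≤ δ) (hδ1 : δ ≤ 1) :
    ∀ (N : ℕ) (U : Finset ι), U.card ≤ N → U.Nonempty →
      (∀ m, m ∉ U → (b m).1 ≤ (avg b U).1 ∧ (b m).2 ≤ (avg b U).2) →
      ∃ L₁ L₂ : Finset ι, IsPureNE b δ L₁ L₂ := by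
  intro N
  induction N with
  | zero => intro U hc hne _; exact absurd hc (by simpa using hne.card_pos.ne')
  | succ N ih =>
    intro U hcard hne hout
    classical
    set B := avg b U with hB
    by_cases hdom : ∃ m₀ ∈ U, (b m₀).1 ≤ B.1 ∧ (b m₀).2 ≤ B.2
    · obtain ⟨m₀, hm₀U, hm₀1, hm₀2⟩ := hdom
      by_cases hcard1 : U.card = 1
      · -- U = {m₀}, dominant alternative
        obtain ⟨x, hx⟩ := Finset.card_eq_one.mp hcard1
        have hxm : m₀ = x := by
          rw [hx, Finset.mem_singleton] at hm₀U; exact hm₀U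
        subst hxm
        have hBeq : B = b m₀ := by rw [hB, hx, avg_singleton]
        have hout' : ∀ m, m ∉ ({m₀} : Finset ι) →
            (b m).1 ≤ (b m₀).1 ∧ (b m).2 ≤ (b m₀).2 := by
          intro m hm
          rw [← hBeq]
          exact hout m (by rw [hx]; exact hm)
        refine ⟨{m₀}, {m₀}, ?_⟩
        have hint : ({m₀} : Finset ι) ∩ {m₀} = {m₀} := Finset.inter_self _
        have hun : ({m₀} : Finset ι) ∪ {m₀} = {m₀} := Finset.union_self _
        have hBx : avg b {m₀} = b m₀ := avg_singleton b m₀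
        refine NE_inter b δ hδ0 hδ1 {m₀} {m₀} (by rw [hint]; exact Finset.singleton_nonempty _)
          ?_ ?_ ?_ ?_ ?_ ?_ ?_ ?_ <;> simp only [hint, hun, hBx]
        · intro m hm
          rw [Finset.mem_singleton] at hm; subst hm; exact le_refl _
        · intro m hm hmn
          rw [Finset.mem_singleton] at hm; subst hm
          exact absurd (Finset.mem_singleton_self m) hmn
        · intro m hm hmn
          exact (hout' m hmn).1
        · exact le_refl _
        · intro m hm
          rw [Finset.mem_singleton] at hm; subst hm; exact le_refl _
        · intro m hm hmn
          rw [Finset.mem_singleton] at hm; subst hm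
          exact absurd (Finset.mem_singleton_self m) hmn
        · intro m hm hmn
          exact (hout' m hmn).2
        · exact le_refl _
      · -- remove m₀ and recurse
        have hc2 : 2 ≤ U.card := by
          have := hne.card_pos; omega
        set U' := U.erase m₀ with hU'
        have hcardU' : U'.card = U.card - 1 := Finset.card_erase_of_mem hm₀U
        have hU'ne : U'.Nonempty := by
          rw [← Finset.card_pos, hcardU']; omega
        have hposU' : (0:ℝ) < U'.card := by exact_mod_cast hU'ne.card_pos
        have hsum1 : ∑ m ∈ U, (b m).1 = B.1 * U.card := sum_fst_eq b U hne
        have hsum2 : ∑ m ∈ U, (b m).2 = B.2 * U.card := sum_snd_eq b U hne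
        have hs1' : ∑ m ∈ U', (b m).1 = (avg b U').1 * U'.card := sum_fst_eq b U' hU'ne
        have hs2' : ∑ m ∈ U', (b m).2 = (avg b U').2 * U'.card := sum_snd_eq b U' hU'ne
        have hes1 : (b m₀).1 + ∑ m ∈ U', (b m).1 = ∑ m ∈ U, (b m).1 :=
          Finset.add_sum_erase U (fun m => (b m).1) hm₀U
        have hes2 : (b m₀).2 + ∑ m ∈ U', (b m).2 = ∑ m ∈ U, (b m).2 :=
          Finset.add_sum_erase U (fun m => (b m).2) hm₀U
        have hcc : (U'.card : ℝ) = (U.card : ℝ) - 1 := by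
          rw [hcardU']
          have h1 : 1 ≤ U.card := by omega
          push_cast [Nat.cast_sub h1]; ring
        have e1 : B.1 * (U'.card : ℝ) = B.1 * (U.card : ℝ) - B.1 := by rw [hcc]; ring
        have e2 : B.2 * (U'.card : ℝ) = B.2 * (U.card : ℝ) - B.2 := by rw [hcc]; ring
        have hA1 : B.1 ≤ (avg b U').1 :=
          le_of_mul_le_mul_right (by linarith) hposU'
        have hA2 : B.2 ≤ (avg b U').2 :=
          le_of_mul_le_mul_right (by linarith) hposU'
        refine ih U' (by omega) hU'ne ?_
        intro m hm
        by_cases hmU : m ∈ U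
        · have : m = m₀ := by
            by_contra hne'
            exact hm (Finset.mem_erase.mpr ⟨hne', hmU⟩)
          subst this
          exact ⟨le_trans hm₀1 hA1, le_trans hm₀2 hA2⟩
        · obtain ⟨o1, o2⟩ := hout m hmU
          exact ⟨le_trans o1 hA1, le_trans o2 hA2⟩
    · push_neg at hdom
      -- every element of U is NOT dominated by the average B
      have hnd : ∀ m ∈ U, B.1 < (b m).1 ∨ B.2 < (b m).2 := by
        intro m hm
        rcases le_or_gt (b m).1 B.1 with h | h
        · exact Or.inr (hdom m hm h)
        · exact Or.inl h
      have hUne : (U : Finset ι).Nonempty := hne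
      have hsum1 : ∑ m ∈ U, (b m).1 = B.1 * U.card := sum_fst_eq b U hne
      have hsum2 : ∑ m ∈ U, (b m).2 = B.2 * U.card := sum_snd_eq b U hne
      set D := U.filter (fun m => B.1 ≤ (b m).1 ∧ B.2 ≤ (b m).2) with hD
      by_cases hDne : D.Nonempty
      · -- intersecting equilibrium around a best compromise alternative
        obtain ⟨mh, hmhD, hmax⟩ := D.exists_max_image (fun m => (b m).1 + (b m).2) hDne
        rw [hD, Finset.mem_filter] at hmhD
        obtain ⟨hmhU, hBA1, hBA2⟩ := hmhD
        set A := b mh with hA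
        have hnodom : ∀ m ∈ U, ¬(A.1 < (b m).1 ∧ A.2 < (b m).2) := by
          rintro m hm ⟨hlt1, hlt2⟩
          have hmD : m ∈ D := by
            rw [hD, Finset.mem_filter]
            exact ⟨hm, le_of_lt (lt_of_le_of_lt hBA1 hlt1),
              le_of_lt (lt_of_le_of_lt hBA2 hlt2)⟩
          have := hmax m hmD
          rw [hD, Finset.mem_filter] at hmD
          linarith
        set P := (U.erase mh).filter (fun m => B.1 ≤ (b m).1 ∧ (b m).2 ≤ A.2) with hP
        set Q := (U.erase mh) \ P with hQ
        have hPe : mh ∉ P := by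
          rw [hP, Finset.mem_filter]
          rintro ⟨hc, -⟩
          exact (Finset.notMem_erase mh U) hc
        have hQe : mh ∉ Q := by
          rw [hQ, Finset.mem_sdiff]
          rintro ⟨hc, -⟩
          exact (Finset.notMem_erase mh U) hc
        refine ⟨insert mh P, insert mh Q, ?_⟩
        have hIeq : (insert mh P) ∩ (insert mh Q) = {mh} := by
          ext m
          simp only [Finset.mem_inter, Finset.mem_insert, Finset.mem_singleton]
          constructor
          · rintro ⟨h1 | h1, h2 | h2⟩
            · exact h1
            · exact h1
            · exact h2
            · rw [hQ, Finset.mem_sdiff] at h2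
              exact absurd h1 h2.2
          · rintro rfl
            exact ⟨Or.inl rfl, Or.inl rfl⟩
        have hUeq : (insert mh P) ∪ (insert mh Q) = U := by
          ext m
          simp only [Finset.mem_union, Finset.mem_insert]
          constructor
          · rintro ((h | h) | (h | h))
            · rw [h]; exact hmhU
            · exact Finset.mem_of_mem_erase (Finset.mem_of_mem_filter m h)
            · rw [h]; exact hmhU
            · rw [hQ, Finset.mem_sdiff] at h
              exact Finset.mem_of_mem_erase h.1
          · intro hm
            by_cases hmm : m = mh
            · exact Or.inl (Or.inl hmm)
            · have hmer : m ∈ U.erase mh := Finset.mem_erase.mpr ⟨hmm, hm⟩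
              by_cases hmp : m ∈ P
              · exact Or.inl (Or.inr hmp)
              · refine Or.inr (Or.inr ?_)
                rw [hQ, Finset.mem_sdiff]
                exact ⟨hmer, hmp⟩
        have hAvgI : avg b ((insert mh P) ∩ (insert mh Q)) = A := by
          rw [hIeq, avg_singleton]
        have hAvgU : avg b ((insert mh P) ∪ (insert mh Q)) = B := by
          rw [hUeq]
        -- characterize membership in Q
        have hQmem : ∀ m ∈ Q, m ∈ U ∧ m ≠ mh ∧ ¬(B.1 ≤ (b m).1 ∧ (b m).2 ≤ A.2) := by
          intro m hm
          rw [hQ, Finset.mem_sdiff, Finset.mem_erase] at hm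
          refine ⟨hm.1.2, hm.1.1, ?_⟩
          intro hc
          exact hm.2 (by rw [hP, Finset.mem_filter]; exact ⟨Finset.mem_erase.mpr ⟨hm.1.1, hm.1.2⟩, hc⟩)
        refine NE_inter b δ hδ0 hδ1 _ _ (by rw [hIeq]; exact Finset.singleton_nonempty _)
          ?_ ?_ ?_ ?_ ?_ ?_ ?_ ?_ <;> simp only [hAvgI, hAvgU]
        · -- h1 : everything in L₂ has first coordinate ≤ A.1
          intro m hm
          rcases Finset.mem_insert.mp hm with rfl | hmQ
          · exact le_refl _
          · obtain ⟨hmU, hmne, hmc⟩ := hQmem m hmQ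
            push_neg at hmc
            rcases le_or_gt (b m).1 B.1 with h | h
            · exact le_trans h hBA1
            · by_contra hc
              push_neg at hc
              have h2 : A.2 < (b m).2 := hmc (le_of_lt h)
              exact hnodom m hmU ⟨hc, h2⟩
        · -- h2 : elements of P have first coordinate ≥ B.1
          intro m hm hmn
          rcases Finset.mem_insert.mp hm with rfl | hmP
          · exact absurd (Finset.mem_insert_self m Q) hmn
          · rw [hP, Finset.mem_filter] at hmP
            exact hmP.2.1
        · -- h3 : outside U
          intro m hm1 hm2
          have : m ∉ U := by
            rw [← hUeq]
            intro hc
            rcases Finset.mem_union.mp hc with h | h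
            · exact hm1 h
            · exact hm2 h
          exact (hout m this).1
        · exact hBA1
        · -- h1' : everything in L₁ has second coordinate ≤ A.2
          intro m hm
          rcases Finset.mem_insert.mp hm with rfl | hmP
          · exact le_refl _
          · rw [hP, Finset.mem_filter] at hmP
            exact hmP.2.2
        · -- h2' : elements of Q have second coordinate ≥ B.2
          intro m hm hmn
          rcases Finset.mem_insert.mp hm with rfl | hmQ
          · exact absurd (Finset.mem_insert_self m P) hmn
          · obtain ⟨hmU, hmne, hmc⟩ := hQmem m hmQ
            push_neg at hmc
            rcases le_or_gt (b m).1 B.1 with h | h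
            · rcases hnd m hmU with h' | h'
              · exact absurd h' (not_lt.mpr h)
              · exact le_of_lt h'
            · have h2 : A.2 < (b m).2 := hmc (le_of_lt h)
              exact le_trans hBA2 (le_of_lt h2)
        · -- h3' : outside U
          intro m hm1 hm2
          have : m ∉ U := by
            rw [← hUeq]
            intro hc
            rcases Finset.mem_union.mp hc with h | h
            · exact hm1 h
            · exact hm2 h
          exact (hout m this).2
        · exact hBA2
      · -- disjoint equilibrium
        have hDe : D = ∅ := Finset.not_nonempty_iff_eq_empty.mp hDne
        have hsplit : ∀ m ∈ U, (B.1 ≤ (b m).1 ∧ (b m).2 ≤ B.2) ∨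
            ((b m).1 ≤ B.1 ∧ B.2 ≤ (b m).2) := by
          intro m hm
          have hmD : ¬(B.1 ≤ (b m).1 ∧ B.2 ≤ (b m).2) := by
            intro hc
            have : m ∈ D := by rw [hD, Finset.mem_filter]; exact ⟨hm, hc⟩
            rw [hDe] at this
            exact absurd this (Finset.notMem_empty m)
          rcases le_total (b m).1 B.1 with h1 | h1 <;> rcases le_total (b m).2 B.2 with h2 | h2
          · rcases hnd m hm with h | h
            · exact absurd h (not_lt.mpr h1)
            · exact absurd h (not_lt.mpr h2)
          · exact Or.inr ⟨h1, h2⟩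
          · exact Or.inl ⟨h1, h2⟩
          · exact absurd ⟨h1, h2⟩ hmD
        set L₁ := U.filter (fun m => B.1 ≤ (b m).1 ∧ (b m).2 ≤ B.2) with hL₁
        set L₂ := U \ L₁ with hL₂
        have hdisj : L₁ ∩ L₂ = ∅ := Finset.inter_sdiff_self L₁ U
        have hUeq : L₁ ∪ L₂ = U := by
          rw [hL₂]
          exact Finset.union_sdiff_of_subset (Finset.filter_subset _ U)
        have hL₂mem : ∀ m ∈ L₂, (b m).1 ≤ B.1 ∧ B.2 ≤ (b m).2 := by
          intro m hm
          rw [hL₂, Finset.mem_sdiff] at hm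
          rcases hsplit m hm.1 with h | h
          · exfalso
            exact hm.2 (by rw [hL₁]; exact Finset.mem_filter.mpr ⟨hm.1, h⟩)
          · exact h
        have hL₁mem : ∀ m ∈ L₁, B.1 ≤ (b m).1 ∧ (b m).2 ≤ B.2 := by
          intro m hm
          rw [hL₁, Finset.mem_filter] at hm
          exact hm.2
        -- nonemptiness of L₁
        have hne1 : L₁.Nonempty := by
          rw [Finset.nonempty_iff_ne_empty]
          intro hc
          have hall : ∀ m ∈ U, (b m).1 ≤ B.1 ∧ B.2 ≤ (b m).2 := by
            intro m hm
            rcases hsplit m hm with h | h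
            · exfalso
              have hmL : m ∈ L₁ := by rw [hL₁]; exact Finset.mem_filter.mpr ⟨hm, h⟩
              rw [hc] at hmL
              exact Finset.notMem_empty m hmL
            · exact h
          have heq1 : ∀ m ∈ U, (b m).1 = B.1 := by
            by_contra hcc
            push_neg at hcc
            obtain ⟨m, hmU, hmne⟩ := hcc
            have : ∑ m ∈ U, (b m).1 < ∑ _m ∈ U, B.1 := by
              refine Finset.sum_lt_sum (fun i hi => (hall i hi).1) ⟨m, hmU, ?_⟩
              exact lt_of_le_of_ne (hall m hmU).1 hmne
            rw [Finset.sum_const, nsmul_eq_mul] at this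
            rw [hsum1] at this
            linarith [this]
          obtain ⟨m0, hm0⟩ := hne
          rcases hnd m0 hm0 with h | h
          · rw [heq1 m0 hm0] at h
            exact lt_irrefl _ h
          · have : ∑ _m ∈ U, B.2 < ∑ m ∈ U, (b m).2 := by
              refine Finset.sum_lt_sum (fun i hi => (hall i hi).2) ⟨m0, hm0, h⟩
            rw [Finset.sum_const, nsmul_eq_mul] at this
            rw [hsum2] at this
            linarith [this]
        -- nonemptiness of L₂
        have hne2 : L₂.Nonempty := by
          rw [Finset.nonempty_iff_ne_empty]
          intro hc
          have hUL : L₁ = U := by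
            rw [← hUeq, hc, Finset.union_empty]
          have hall : ∀ m ∈ U, B.1 ≤ (b m).1 ∧ (b m).2 ≤ B.2 := by
            intro m hm
            exact hL₁mem m (by rw [hUL]; exact hm)
          have heq2 : ∀ m ∈ U, (b m).2 = B.2 := by
            by_contra hcc
            push_neg at hcc
            obtain ⟨m, hmU, hmne⟩ := hcc
            have : ∑ m ∈ U, (b m).2 < ∑ _m ∈ U, B.2 := by
              refine Finset.sum_lt_sum (fun i hi => (hall i hi).2) ⟨m, hmU, ?_⟩
              exact lt_of_le_of_ne (hall m hmU).2 hmne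
            rw [Finset.sum_const, nsmul_eq_mul] at this
            rw [hsum2] at this
            linarith [this]
          obtain ⟨m0, hm0⟩ := hne
          rcases hnd m0 hm0 with h | h
          · have : ∑ _m ∈ U, B.1 < ∑ m ∈ U, (b m).1 := by
              refine Finset.sum_lt_sum (fun i hi => (hall i hi).1) ⟨m0, hm0, h⟩
            rw [Finset.sum_const, nsmul_eq_mul] at this
            rw [hsum1] at this
            linarith [this]
          · rw [heq2 m0 hm0] at h
            exact lt_irrefl _ h
        refine ⟨L₁, L₂, ?_⟩
        have hAvgU : avg b (L₁ ∪ L₂) = B := by rw [hUeq]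
        refine NE_disj b δ hδ0 hδ1 L₁ L₂ hdisj hne1 hne2 ?_ ?_ ?_ ?_ ?_ ?_ <;> rw [hAvgU]
        · exact fun m hm => (hL₂mem m hm).1
        · exact fun m hm => (hL₁mem m hm).1
        · intro m hm1 hm2
          have : m ∉ U := by
            rw [← hUeq]
            intro hc
            rcases Finset.mem_union.mp hc with h | h
            · exact hm1 h
            · exact hm2 h
          exact (hout m this).1
        · exact fun m hm => (hL₁mem m hm).2
        · exact fun m hm => (hL₂mem m hm).2
        · intro m hm1 hm2
          have : m ∉ U := by
            rw [← hUeq]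
            intro hc
            rcases Finset.mem_union.mp hc with h | h
            · exact hm1 h
            · exact hm2 h
          exact (hout m this).2

end Existence

lemma exists_NE {ι : Type*} [Fintype ι] [Nonempty ι] (b : ι → ℝ × ℝ) (δ : ℝ)
    (hδ0 : 0 ≤ δ) (hδ1 : δ ≤ 1) : ∃ L₁ L₂ : Finset ι, IsPureNE b δ L₁ L₂ :=
  exists_NE_core b δ hδ0 hδ1 Finset.univ.card Finset.univ le_rfl Finset.univ_nonempty
    (fun m hm => absurd (Finset.mem_univ m) hm)

section Triangle

/-- Any point of a triangle is dominated (componentwise) by a point of one of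
the sides, sorted version. -/
lemma tri_sorted (x p q : ℝ × ℝ) (α β γ : ℝ) (hα : 0 ≤ α) (hβ : 0 ≤ β) (hγ : 0 ≤ γ)
    (hs : α + β + γ = 1) (hxq : x.1 ≤ q.1) (hqp : q.1 ≤ p.1) :
    ∃ (u v : ℝ × ℝ) (μ : ℝ), (u = x ∨ u = p ∨ u = q) ∧ (v = x ∨ v = p ∨ v = q) ∧
      0 ≤ μ ∧ μ ≤ 1 ∧
      α * x.1 + β * p.1 + γ * q.1 ≤ μ * u.1 + (1 - μ) * v.1 ∧
      α * x.2 + β * p.2 + γ * q.2 ≤ μ * u.2 + (1 - μ) * v.2 := by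
  set z1 := α * x.1 + β * p.1 + γ * q.1 with hz1
  set z2 := α * x.2 + β * p.2 + γ * q.2 with hz2
  clear_value z1 z2
  have hz1x : x.1 ≤ z1 := by
    have h1 : 0 ≤ β * (p.1 - x.1) := mul_nonneg hβ (by linarith)
    have h2 : 0 ≤ γ * (q.1 - x.1) := mul_nonneg hγ (by linarith)
    have e : z1 - x.1 = β * (p.1 - x.1) + γ * (q.1 - x.1) := by
      rw [hz1]; linear_combination x.1 * hs
    linarith
  have hz1p : z1 ≤ p.1 := by
    have h1 : 0 ≤ α * (p.1 - x.1) := mul_nonneg hα (by linarith)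
    have h2 : 0 ≤ γ * (p.1 - q.1) := mul_nonneg hγ (by linarith)
    have e : p.1 - z1 = α * (p.1 - x.1) + γ * (p.1 - q.1) := by
      rw [hz1]; linear_combination (-p.1) * hs
    linarith
  by_cases hxp : x.1 = p.1
  · -- degenerate: all three first coordinates equal
    have hq1 : q.1 = x.1 := le_antisymm (by rw [hxp]; exact hqp) hxq
    have hz1e : z1 = x.1 := by
      rw [hz1, hq1, ← hxp]; linear_combination x.1 * hs
    obtain ⟨w, hwmem, hw2⟩ : ∃ w : ℝ × ℝ, (w = x ∨ w = p ∨ w = q) ∧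
        (x.2 ≤ w.2 ∧ p.2 ≤ w.2 ∧ q.2 ≤ w.2) := by
      rcases le_total x.2 p.2 with h1 | h1
      · rcases le_total p.2 q.2 with h2 | h2
        · exact ⟨q, Or.inr (Or.inr rfl), le_trans h1 h2, h2, le_refl _⟩
        · exact ⟨p, Or.inr (Or.inl rfl), h1, le_refl _, h2⟩
      · rcases le_total x.2 q.2 with h3 | h3
        · exact ⟨q, Or.inr (Or.inr rfl), h3, le_trans h1 h3, le_refl _⟩
        · exact ⟨x, Or.inl rfl, le_refl _, h1, h3⟩
    have hw1 : w.1 = x.1 := by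
      rcases hwmem with rfl | rfl | rfl
      · rfl
      · rw [← hxp]
      · exact hq1
    refine ⟨w, w, 1, hwmem, hwmem, zero_le_one, le_refl _, ?_, ?_⟩
    · have e : (1:ℝ) * w.1 + (1 - 1) * w.1 = w.1 := by ring
      rw [e, hw1, hz1e]
    · have h1 : 0 ≤ α * (w.2 - x.2) := mul_nonneg hα (by linarith [hw2.1])
      have h2 : 0 ≤ β * (w.2 - p.2) := mul_nonneg hβ (by linarith [hw2.2.1])
      have h3 : 0 ≤ γ * (w.2 - q.2) := mul_nonneg hγ (by linarith [hw2.2.2])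
      have e : (1:ℝ) * w.2 + (1 - 1) * w.2 - z2
          = α * (w.2 - x.2) + β * (w.2 - p.2) + γ * (w.2 - q.2) := by
        rw [hz2]; linear_combination (-w.2) * hs
      linarith
  · have hxp' : x.1 < p.1 := lt_of_le_of_ne (le_trans hxq hqp) hxp
    have hden : (0:ℝ) < p.1 - x.1 := by linarith
    have h0 : p.1 - x.1 ≠ 0 := ne_of_gt hden
    by_cases hcross : (p.1 - x.1) * (q.2 - x.2) - (p.2 - x.2) * (q.1 - x.1) ≤ 0
    · -- q is below the segment [x, p]: replace q by the point of [x,p] above it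
      set s := (p.1 - q.1) / (p.1 - x.1) with hsdef
      have hs0 : 0 ≤ s := div_nonneg (by linarith) (le_of_lt hden)
      have hs1 : s ≤ 1 := by
        rw [hsdef, div_le_one hden]; linarith
      have h1 : s * x.1 + (1 - s) * p.1 = q.1 := by
        rw [hsdef]; field_simp; ring
      have h2 : q.2 ≤ s * x.2 + (1 - s) * p.2 := by
        have e : s * x.2 + (1 - s) * p.2 - q.2
            = (-((p.1 - x.1) * (q.2 - x.2) - (p.2 - x.2) * (q.1 - x.1))) / (p.1 - x.1) := by
          rw [hsdef]; field_simp; ring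
        have hnum : 0 ≤ -((p.1 - x.1) * (q.2 - x.2) - (p.2 - x.2) * (q.1 - x.1)) := by
          linarith
        have h4 : 0 ≤ s * x.2 + (1 - s) * p.2 - q.2 := by
          rw [e]; exact div_nonneg hnum (le_of_lt hden)
        linarith
      refine ⟨x, p, α + γ * s, Or.inl rfl, Or.inr (Or.inl rfl),
        by positivity, by nlinarith, ?_, ?_⟩
      · have hβγ : 1 - (α + γ * s) = β + γ * (1 - s) := by linarith
        have e : (α + γ * s) * x.1 + (1 - (α + γ * s)) * p.1
            = α * x.1 + β * p.1 + γ * (s * x.1 + (1 - s) * p.1) := by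
          rw [hβγ]; ring
        rw [e, h1, ← hz1]
      · have hβγ : 1 - (α + γ * s) = β + γ * (1 - s) := by linarith
        have e : (α + γ * s) * x.2 + (1 - (α + γ * s)) * p.2
            = α * x.2 + β * p.2 + γ * (s * x.2 + (1 - s) * p.2) := by
          rw [hβγ]; ring
        rw [e]
        have h3 : 0 ≤ γ * ((s * x.2 + (1 - s) * p.2) - q.2) :=
          mul_nonneg hγ (by linarith)
        rw [hz2]
        nlinarith [h3]
    · push_neg at hcross
      by_cases hz1q : z1 ≤ q.1
      · -- use the segment [x, q]
        by_cases hxq1 : x.1 = q.1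
        · -- then β = 0 and z is a combination of x and q
          have hβe : β * (p.1 - x.1) = 0 := by
            have e : z1 - x.1 = β * (p.1 - x.1) + γ * (q.1 - x.1) := by
              rw [hz1]; linear_combination x.1 * hs
            rw [← hxq1] at hz1q
            have h2 : 0 ≤ γ * (q.1 - x.1) := mul_nonneg hγ (by linarith)
            have h1 : 0 ≤ β * (p.1 - x.1) := mul_nonneg hβ (by linarith)
            linarith
          have hβ0 : β = 0 := by
            rcases mul_eq_zero.mp hβe with h | h
            · exact h
            · exact absurd h h0
          refine ⟨x, q, α, Or.inl rfl, Or.inr (Or.inr rfl), hα, by linarith, ?_, ?_⟩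
          · have e : α * x.1 + (1 - α) * q.1 = α * x.1 + β * p.1 + γ * q.1 := by
              linear_combination (-q.1) * hs + (q.1 - p.1) * hβ0
            rw [hz1, ← e]
          · have e : α * x.2 + (1 - α) * q.2 = α * x.2 + β * p.2 + γ * q.2 := by
              linear_combination (-q.2) * hs + (q.2 - p.2) * hβ0
            rw [hz2, ← e]
        · have hxq' : x.1 < q.1 := lt_of_le_of_ne hxq hxq1
          have hdenq : (0:ℝ) < q.1 - x.1 := by linarith
          have h0q : q.1 - x.1 ≠ 0 := ne_of_gt hdenq
          set lam := (q.1 - z1) / (q.1 - x.1) with hlam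
          have hl0 : 0 ≤ lam := div_nonneg (by linarith) (le_of_lt hdenq)
          have hl1 : lam ≤ 1 := by rw [hlam, div_le_one hdenq]; linarith
          have e1 : z1 - x.1 = β * (p.1 - x.1) + γ * (q.1 - x.1) := by
            rw [hz1]; linear_combination x.1 * hs
          have e2 : z2 - x.2 = β * (p.2 - x.2) + γ * (q.2 - x.2) := by
            rw [hz2]; linear_combination x.2 * hs
          have hkey : (q.1 - x.1) * (z2 - x.2) - (z1 - x.1) * (q.2 - x.2)
              = -(β * ((p.1 - x.1) * (q.2 - x.2) - (p.2 - x.2) * (q.1 - x.1))) := by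
            rw [e1, e2]; ring
          have hbc : 0 ≤ β * ((p.1 - x.1) * (q.2 - x.2) - (p.2 - x.2) * (q.1 - x.1)) :=
            mul_nonneg hβ (le_of_lt hcross)
          refine ⟨x, q, lam, Or.inl rfl, Or.inr (Or.inr rfl), hl0, hl1, ?_, ?_⟩
          · have h1 : lam * x.1 + (1 - lam) * q.1 = z1 := by
              rw [hlam]; field_simp
              linarith
            rw [h1]
          · have e : lam * x.2 + (1 - lam) * q.2 - z2
                = ((q.1 - z1) * x.2 + (z1 - x.1) * q.2 - (q.1 - x.1) * z2) / (q.1 - x.1) := by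
              rw [hlam]; field_simp
              try ring
            have hnum : 0 ≤ (q.1 - z1) * x.2 + (z1 - x.1) * q.2 - (q.1 - x.1) * z2 := by
              have ht : (q.1 - z1) * x.2 + (z1 - x.1) * q.2 - (q.1 - x.1) * z2
                  = -((q.1 - x.1) * (z2 - x.2) - (z1 - x.1) * (q.2 - x.2)) := by ring
              rw [ht, hkey]
              linarith
            have h4 : 0 ≤ lam * x.2 + (1 - lam) * q.2 - z2 := by
              rw [e]; exact div_nonneg hnum (le_of_lt hdenq)
            linarith
      · push_neg at hz1q
        have hqp' : q.1 < p.1 := lt_of_lt_of_le hz1q hz1p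
        have hdenp : (0:ℝ) < p.1 - q.1 := by linarith
        have h0p : p.1 - q.1 ≠ 0 := ne_of_gt hdenp
        set lam := (p.1 - z1) / (p.1 - q.1) with hlam
        have hl0 : 0 ≤ lam := div_nonneg (by linarith) (le_of_lt hdenp)
        have hl1 : lam ≤ 1 := by rw [hlam, div_le_one hdenp]; linarith
        have e1 : z1 - q.1 = α * (x.1 - q.1) + β * (p.1 - q.1) := by
          rw [hz1]; linear_combination q.1 * hs
        have e2 : z2 - q.2 = α * (x.2 - q.2) + β * (p.2 - q.2) := by
          rw [hz2]; linear_combination q.2 * hs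
        have hkey : (p.1 - q.1) * (z2 - q.2) - (z1 - q.1) * (p.2 - q.2)
            = -(α * ((p.1 - x.1) * (q.2 - x.2) - (p.2 - x.2) * (q.1 - x.1))) := by
          rw [e1, e2]; ring
        have hbc : 0 ≤ α * ((p.1 - x.1) * (q.2 - x.2) - (p.2 - x.2) * (q.1 - x.1)) :=
          mul_nonneg hα (le_of_lt hcross)
        refine ⟨q, p, lam, Or.inr (Or.inr rfl), Or.inr (Or.inl rfl), hl0, hl1, ?_, ?_⟩
        · have h1 : lam * q.1 + (1 - lam) * p.1 = z1 := by
            rw [hlam]; field_simp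
            linarith
          rw [h1]
        · have e : lam * q.2 + (1 - lam) * p.2 - z2
              = ((p.1 - z1) * q.2 + (z1 - q.1) * p.2 - (p.1 - q.1) * z2) / (p.1 - q.1) := by
            rw [hlam]; field_simp
            try ring
          have hnum : 0 ≤ (p.1 - z1) * q.2 + (z1 - q.1) * p.2 - (p.1 - q.1) * z2 := by
            have ht : (p.1 - z1) * q.2 + (z1 - q.1) * p.2 - (p.1 - q.1) * z2
                = -((p.1 - q.1) * (z2 - q.2) - (z1 - q.1) * (p.2 - q.2)) := by ring
            rw [ht, hkey]
            linarith
          have h4 : 0 ≤ lam * q.2 + (1 - lam) * p.2 - z2 := by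
            rw [e]; exact div_nonneg hnum (le_of_lt hdenp)
          linarith

end Triangle

/-- Unsorted triangle lemma. -/
lemma tri (x p q : ℝ × ℝ) (α β γ : ℝ) (hα : 0 ≤ α) (hβ : 0 ≤ β) (hγ : 0 ≤ γ)
    (hs : α + β + γ = 1) :
    ∃ (u v : ℝ × ℝ) (μ : ℝ), (u = x ∨ u = p ∨ u = q) ∧ (v = x ∨ v = p ∨ v = q) ∧
      0 ≤ μ ∧ μ ≤ 1 ∧
      α * x.1 + β * p.1 + γ * q.1 ≤ μ * u.1 + (1 - μ) * v.1 ∧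
      α * x.2 + β * p.2 + γ * q.2 ≤ μ * u.2 + (1 - μ) * v.2 := by
  rcases le_total x.1 q.1 with h1 | h1
  · rcases le_total q.1 p.1 with h2 | h2
    · obtain ⟨u, v, μ, hu, hv, h0, hh1, i1, i2⟩ := tri_sorted x p q α β γ hα hβ hγ hs h1 h2
      exact ⟨u, v, μ, by tauto, by tauto, h0, hh1, by linarith, by linarith⟩
    · rcases le_total x.1 p.1 with h3 | h3
      · obtain ⟨u, v, μ, hu, hv, h0, hh1, i1, i2⟩ :=
          tri_sorted x q p α γ β hα hγ hβ (by linarith) h3 h2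
        exact ⟨u, v, μ, by tauto, by tauto, h0, hh1, by linarith, by linarith⟩
      · obtain ⟨u, v, μ, hu, hv, h0, hh1, i1, i2⟩ :=
          tri_sorted p q x β γ α hβ hγ hα (by linarith) h3 h1
        exact ⟨u, v, μ, by tauto, by tauto, h0, hh1, by linarith, by linarith⟩
  · rcases le_total x.1 p.1 with h2 | h2
    · obtain ⟨u, v, μ, hu, hv, h0, hh1, i1, i2⟩ :=
        tri_sorted q p x γ β α hγ hβ hα (by linarith) h1 h2
      exact ⟨u, v, μ, by tauto, by tauto, h0, hh1, by linarith, by linarith⟩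
    · rcases le_total q.1 p.1 with h3 | h3
      · obtain ⟨u, v, μ, hu, hv, h0, hh1, i1, i2⟩ :=
          tri_sorted q x p γ α β hγ hα hβ (by linarith) h3 h2
        exact ⟨u, v, μ, by tauto, by tauto, h0, hh1, by linarith, by linarith⟩
      · obtain ⟨u, v, μ, hu, hv, h0, hh1, i1, i2⟩ :=
          tri_sorted p x q β α γ hβ hα hγ (by linarith) h3 h1
        exact ⟨u, v, μ, by tauto, by tauto, h0, hh1, by linarith, by linarith⟩

/-- Every point of the convex hull of a finite planar set is dominated
componentwise by a point of a segment between two elements of the set. -/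
lemma segdom (S : Finset (ℝ × ℝ)) (y : ℝ × ℝ) (hy : y ∈ convexHull ℝ (S : Set (ℝ × ℝ))) :
    ∃ p ∈ S, ∃ q ∈ S, ∃ μ : ℝ, 0 ≤ μ ∧ μ ≤ 1 ∧
      y.1 ≤ μ * p.1 + (1 - μ) * q.1 ∧ y.2 ≤ μ * p.2 + (1 - μ) * q.2 := by
  classical
  induction S using Finset.induction_on generalizing y with
  | empty => simp at hy
  | insert x S hx ih =>
    rcases S.eq_empty_or_nonempty with rfl | hS
    · simp only [LawfulSingleton.insert_empty_eq, Finset.coe_singleton, convexHull_singleton,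
        Set.mem_singleton_iff] at hy
      subst hy
      exact ⟨y, Finset.mem_insert_self _ _, y, Finset.mem_insert_self _ _, 1,
        zero_le_one, le_refl _, by linarith, by linarith⟩
    · have hSne : (S : Set (ℝ × ℝ)).Nonempty := by
        obtain ⟨z, hz⟩ := hS
        exact ⟨z, by exact_mod_cast hz⟩
      rw [Finset.coe_insert, convexHull_insert hSne, mem_convexJoin] at hy
      obtain ⟨x', hx', z, hz, hyseg⟩ := hy
      rw [Set.mem_singleton_iff] at hx'
      subst hx'
      obtain ⟨t1, t2, ht1, ht2, hts, hteq⟩ := hyseg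
      obtain ⟨p, hp, q, hq, μ, hμ0, hμ1, hd1, hd2⟩ := ih z hz
      have hy1 : y.1 = t1 * x'.1 + t2 * z.1 := by
        rw [← hteq, Prod.fst_add, Prod.smul_fst, Prod.smul_fst, smul_eq_mul, smul_eq_mul]
      have hy2 : y.2 = t1 * x'.2 + t2 * z.2 := by
        rw [← hteq, Prod.snd_add, Prod.smul_snd, Prod.smul_snd, smul_eq_mul, smul_eq_mul]
      obtain ⟨u, v, ν, hu, hv, hν0, hν1, i1, i2⟩ :=
        tri x' p q t1 (t2 * μ) (t2 * (1 - μ)) ht1 (by positivity)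
          (mul_nonneg ht2 (by linarith)) (by ring_nf; linarith)
      have hui : u ∈ insert x' S := by
        rcases hu with rfl | rfl | rfl
        · exact Finset.mem_insert_self _ _
        · exact Finset.mem_insert_of_mem hp
        · exact Finset.mem_insert_of_mem hq
      have hvi : v ∈ insert x' S := by
        rcases hv with rfl | rfl | rfl
        · exact Finset.mem_insert_self _ _
        · exact Finset.mem_insert_of_mem hp
        · exact Finset.mem_insert_of_mem hq
      refine ⟨u, hui, v, hvi, ν, hν0, hν1, ?_, ?_⟩
      · have hb1 : t2 * z.1 ≤ t2 * (μ * p.1 + (1 - μ) * q.1) :=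
          mul_le_mul_of_nonneg_left hd1 ht2
        calc y.1 = t1 * x'.1 + t2 * z.1 := hy1
          _ ≤ t1 * x'.1 + t2 * (μ * p.1 + (1 - μ) * q.1) := by linarith
          _ = t1 * x'.1 + (t2 * μ) * p.1 + (t2 * (1 - μ)) * q.1 := by ring
          _ ≤ ν * u.1 + (1 - ν) * v.1 := i1
      · have hb2 : t2 * z.2 ≤ t2 * (μ * p.2 + (1 - μ) * q.2) :=
          mul_le_mul_of_nonneg_left hd2 ht2
        calc y.2 = t1 * x'.2 + t2 * z.2 := hy2
          _ ≤ t1 * x'.2 + t2 * (μ * p.2 + (1 - μ) * q.2) := by linarith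
          _ = t1 * x'.2 + (t2 * μ) * p.2 + (t2 * (1 - μ)) * q.2 := by ring
          _ ≤ ν * u.2 + (1 - ν) * v.2 := i2

section KUN

variable {n : ℕ} (a : Fin n → ℝ × ℝ)

lemma kUN_fst (k : ℕ) (m : Sym (Fin n) k) :
    (kUNColl a k m).1 = (k : ℝ)⁻¹ * (Multiset.map (fun j => (a j).1) m.toMultiset).sum := by
  rw [kUNColl, Prod.smul_fst, smul_eq_mul]
  congr 1
  have h := AddMonoidHom.map_multiset_sum (AddMonoidHom.fst ℝ ℝ) (Multiset.map a m.toMultiset)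
  rw [Multiset.map_map] at h
  exact h

lemma kUN_snd (k : ℕ) (m : Sym (Fin n) k) :
    (kUNColl a k m).2 = (k : ℝ)⁻¹ * (Multiset.map (fun j => (a j).2) m.toMultiset).sum := by
  rw [kUNColl, Prod.smul_snd, smul_eq_mul]
  congr 1
  have h := AddMonoidHom.map_multiset_sum (AddMonoidHom.snd ℝ ℝ) (Multiset.map a m.toMultiset)
  rw [Multiset.map_map] at h
  exact h

lemma kUN_bounds (ha : ∀ j, (a j).1 ∈ Set.Icc (0:ℝ) 1 ∧ (a j).2 ∈ Set.Icc (0:ℝ) 1)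
    (k : ℕ) (hk : 1 ≤ k) (m : Sym (Fin n) k) :
    (0 ≤ (kUNColl a k m).1 ∧ (kUNColl a k m).1 ≤ 1) ∧
    (0 ≤ (kUNColl a k m).2 ∧ (kUNColl a k m).2 ≤ 1) := by
  have hkpos : (0:ℝ) < k := by exact_mod_cast hk
  have hcard : Multiset.card m.toMultiset = k := m.2
  constructor
  · rw [kUN_fst]
    constructor
    · refine mul_nonneg (by positivity) (Multiset.sum_nonneg ?_)
      intro z hz
      rw [Multiset.mem_map] at hz
      obtain ⟨j, _, rfl⟩ := hz
      exact (ha j).1.1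
    · rw [inv_mul_le_iff₀ hkpos, mul_one]
      calc (Multiset.map (fun j => (a j).1) m.toMultiset).sum
          ≤ Multiset.card (Multiset.map (fun j => (a j).1) m.toMultiset) • (1:ℝ) := by
            refine Multiset.sum_le_card_nsmul _ _ ?_
            intro z hz
            rw [Multiset.mem_map] at hz
            obtain ⟨j, _, rfl⟩ := hz
            exact (ha j).1.2
        _ = k := by rw [Multiset.card_map, hcard, nsmul_eq_mul, mul_one]
  · rw [kUN_snd]
    constructor
    · refine mul_nonneg (by positivity) (Multiset.sum_nonneg ?_)
      intro z hz
      rw [Multiset.mem_map] at hz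
      obtain ⟨j, _, rfl⟩ := hz
      exact (ha j).2.1
    · rw [inv_mul_le_iff₀ hkpos, mul_one]
      calc (Multiset.map (fun j => (a j).2) m.toMultiset).sum
          ≤ Multiset.card (Multiset.map (fun j => (a j).2) m.toMultiset) • (1:ℝ) := by
            refine Multiset.sum_le_card_nsmul _ _ ?_
            intro z hz
            rw [Multiset.mem_map] at hz
            obtain ⟨j, _, rfl⟩ := hz
            exact (ha j).2.2
        _ = k := by rw [Multiset.card_map, hcard, nsmul_eq_mul, mul_one]

/-- Rounding a two-point convex combination to a multiset of size `k`. -/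
lemma kUN_round (ha : ∀ j, (a j).1 ∈ Set.Icc (0:ℝ) 1 ∧ (a j).2 ∈ Set.Icc (0:ℝ) 1)
    (k : ℕ) (hk : 1 ≤ k) (p q : Fin n) (μ : ℝ) (hμ0 : 0 ≤ μ) (hμ1 : μ ≤ 1) :
    ∃ m : Sym (Fin n) k,
      μ * (a p).1 + (1 - μ) * (a q).1 - 1 / k ≤ (kUNColl a k m).1 ∧
      μ * (a p).2 + (1 - μ) * (a q).2 - 1 / k ≤ (kUNColl a k m).2 := by
  have hkpos : (0:ℝ) < k := by exact_mod_cast hk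
  set j := ⌊(k : ℝ) * μ⌋₊ with hjdef
  have hjk : j ≤ k := by
    have : (k:ℝ) * μ ≤ k := by nlinarith
    calc j ≤ ⌊(k:ℝ)⌋₊ := Nat.floor_le_floor this
      _ = k := Nat.floor_natCast k
  have hfl : (j:ℝ) ≤ (k:ℝ) * μ := Nat.floor_le (by positivity)
  have hfu : (k:ℝ) * μ < (j:ℝ) + 1 := Nat.lt_floor_add_one _
  refine ⟨Sym.mk (Multiset.replicate j p + Multiset.replicate (k - j) q) ?_, ?_⟩
  · rw [Multiset.card_add, Multiset.card_replicate, Multiset.card_replicate]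
    omega
  · have htm : (Sym.toMultiset (α := Fin n) (n := k)
        ⟨Multiset.replicate j p + Multiset.replicate (k - j) q, by
          rw [Multiset.card_add, Multiset.card_replicate, Multiset.card_replicate]; omega⟩)
        = Multiset.replicate j p + Multiset.replicate (k - j) q := rfl
    have hcast : (((k - j : ℕ)):ℝ) = (k:ℝ) - (j:ℝ) := by
      push_cast [Nat.cast_sub hjk]
      ring
    have hv1 : ∀ (f : Fin n → ℝ),
        (Multiset.map f (Multiset.replicate j p + Multiset.replicate (k - j) q)).sum
          = (j:ℝ) * f p + ((k:ℝ) - (j:ℝ)) * f q := by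
      intro f
      rw [Multiset.map_add, Multiset.sum_add, Multiset.map_replicate, Multiset.map_replicate,
        Multiset.sum_replicate, Multiset.sum_replicate, nsmul_eq_mul, nsmul_eq_mul, hcast]
    have hap := ha p
    have haq := ha q
    obtain ⟨⟨hp10, hp11⟩, ⟨hp20, hp21⟩⟩ := hap
    obtain ⟨⟨hq10, hq11⟩, ⟨hq20, hq21⟩⟩ := haq
    have h1 : 0 ≤ (k:ℝ) * μ - j := by linarith
    have h2 : (k:ℝ) * μ - j ≤ 1 := by linarith
    constructor
    · rw [kUN_fst, htm, hv1]
      rw [le_inv_mul_iff₀ hkpos]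
      have hd : -1 ≤ (a q).1 - (a p).1 := by simp at *; linarith
      have hpr : ((k:ℝ) * μ - j) * (-1) ≤ ((k:ℝ) * μ - j) * ((a q).1 - (a p).1) :=
        mul_le_mul_of_nonneg_left hd h1
      have hk1 : (k:ℝ) * (1 / k) = 1 := by field_simp
      nlinarith [hpr]
    · rw [kUN_snd, htm, hv1]
      rw [le_inv_mul_iff₀ hkpos]
      have hd : -1 ≤ (a q).2 - (a p).2 := by simp at *; linarith
      have hpr : ((k:ℝ) * μ - j) * (-1) ≤ ((k:ℝ) * μ - j) * ((a q).2 - (a p).2) :=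
        mul_le_mul_of_nonneg_left hd h1
      have hk1 : (k:ℝ) * (1 / k) = 1 := by field_simp
      nlinarith [hpr]

end KUN

section Part2

variable {ι : Type*} [Fintype ι]

lemma insert_avg_le_fst (b : ι → ℝ × ℝ) (U : Finset ι) (hU : U.Nonempty) (ms : ι)
    (hms : ms ∉ U) (h : (avg b (insert ms U)).1 ≤ (avg b U).1) :
    (b ms).1 ≤ (avg b U).1 := by
  classical
  have hc : (insert ms U).card = U.card + 1 := Finset.card_insert_of_notMem hms
  have hsi : ∑ m ∈ insert ms U, (b m).1 = (b ms).1 + ∑ m ∈ U, (b m).1 :=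
    Finset.sum_insert hms
  have hpos : (0:ℝ) < U.card := by exact_mod_cast hU.card_pos
  have hsum : ∑ m ∈ U, (b m).1 = (avg b U).1 * U.card := sum_fst_eq b U hU
  rw [avg_fst, inv_mul_le_iff₀ (by rw [hc]; push_cast; linarith)] at h
  rw [hsi, hsum] at h
  have hcc : ((insert ms U).card : ℝ) = (U.card : ℝ) + 1 := by rw [hc]; push_cast; ring
  rw [hcc] at h
  nlinarith

lemma insert_avg_le_snd (b : ι → ℝ × ℝ) (U : Finset ι) (hU : U.Nonempty) (ms : ι)
    (hms : ms ∉ U) (h : (avg b (insert ms U)).2 ≤ (avg b U).2) :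
    (b ms).2 ≤ (avg b U).2 := by
  have h' : (avg (Prod.swap ∘ b) (insert ms U)).1 ≤ (avg (Prod.swap ∘ b) U).1 := by
    rw [avg_swap_fst, avg_swap_fst]; exact h
  have := insert_avg_le_fst (Prod.swap ∘ b) U hU ms hms h'
  rw [avg_swap_fst] at this
  exact this

lemma NE_close (b : ι → ℝ × ℝ)
    (hb : ∀ m, (0 ≤ (b m).1 ∧ (b m).1 ≤ 1) ∧ (0 ≤ (b m).2 ∧ (b m).2 ≤ 1))
    (δ : ℝ) (hδ0 : 0 < δ) (hδ1 : δ < 1) (L₁ L₂ : Finset ι)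
    (hNE : IsPureNE b δ L₁ L₂) (ms : ι)
    (h1 : (SAout b δ L₁ L₂).1 + δ < (b ms).1)
    (h2 : (SAout b δ L₁ L₂).2 + δ < (b ms).2) : False := by
  classical
  set o := SAout b δ L₁ L₂ with ho
  have hb1 : ∀ m, 0 ≤ (b m).1 := fun m => ((hb m).1).1
  have hb2 : ∀ m, 0 ≤ (b m).2 := fun m => ((hb m).2).1
  by_cases c2 : L₂ = ∅
  · -- player 1 deviates to {ms}
    have dev := hNE.1 {ms}
    rw [c2] at dev
    have he : ({ms} : Finset ι) ∩ ∅ = ∅ := Finset.inter_empty _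
    have hu : ({ms} : Finset ι) ∪ ∅ = {ms} := Finset.union_empty _
    rw [SAout_disj b δ he (by rw [hu]; exact Finset.singleton_nonempty _), hu,
      avg_singleton] at dev
    rw [ho, c2] at h1
    linarith
  · by_cases c1 : L₁ = ∅
    · have dev := hNE.2 {ms}
      rw [c1] at dev
      have he : (∅ : Finset ι) ∩ {ms} = ∅ := Finset.empty_inter _
      have hu : (∅ : Finset ι) ∪ {ms} = {ms} := Finset.empty_union _
      rw [SAout_disj b δ he (by rw [hu]; exact Finset.singleton_nonempty _), hu,
        avg_singleton] at dev
      rw [ho, c1] at h2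
      linarith
    · have hne1 : L₁.Nonempty := Finset.nonempty_of_ne_empty c1
      have hne2 : L₂.Nonempty := Finset.nonempty_of_ne_empty c2
      by_cases hm2 : ms ∈ L₂
      · have dev := hNE.1 {ms}
        have hi : ({ms} : Finset ι) ∩ L₂ = {ms} := Finset.singleton_inter_of_mem hm2
        rw [SAout_inter b δ (by rw [hi]; exact Finset.singleton_nonempty _), hi,
          avg_singleton, blend_fst] at dev
        have hnn : 0 ≤ (avg b ({ms} ∪ L₂)).1 := avg_fst_nonneg b _ hb1
        have hms1 : (b ms).1 ≤ 1 := ((hb ms).1).2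
        nlinarith
      · by_cases hm1 : ms ∈ L₁
        · have dev := hNE.2 {ms}
          have hi : L₁ ∩ ({ms} : Finset ι) = {ms} := Finset.inter_singleton_of_mem hm1
          rw [SAout_inter b δ (by rw [hi]; exact Finset.singleton_nonempty _), hi,
            avg_singleton, blend_snd] at dev
          have hnn : 0 ≤ (avg b (L₁ ∪ {ms})).2 := avg_snd_nonneg b _ hb2
          have hms2 : (b ms).2 ≤ 1 := ((hb ms).2).2
          nlinarith
        · have hmU : ms ∉ L₁ ∪ L₂ := by
            rw [Finset.mem_union]
            rintro (h | h)
            · exact hm1 h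
            · exact hm2 h
          have hUne : (L₁ ∪ L₂).Nonempty := hne1.mono Finset.subset_union_left
          by_cases hI : (L₁ ∩ L₂).Nonempty
          · -- intersecting equilibrium
            set A := avg b (L₁ ∩ L₂) with hA
            set B := avg b (L₁ ∪ L₂) with hB
            have hoi : o = (1 - δ) • A + δ • B := SAout_inter b δ hI
            have ho1 : o.1 = (1 - δ) * A.1 + δ * B.1 := by rw [hoi, blend_fst]
            have ho2 : o.2 = (1 - δ) * A.2 + δ * B.2 := by rw [hoi, blend_snd]
            -- deviation of player 1 to insert ms L₁
            have hv1 : (b ms).1 ≤ B.1 := by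
              have dev := hNE.1 (insert ms L₁)
              have hii : (insert ms L₁) ∩ L₂ = L₁ ∩ L₂ :=
                Finset.insert_inter_of_notMem hm2
              have huu : (insert ms L₁) ∪ L₂ = insert ms (L₁ ∪ L₂) :=
                Finset.insert_union ms L₁ L₂
              rw [SAout_inter b δ (by rw [hii]; exact hI), hii, huu, blend_fst,
                ← ho, ho1] at dev
              have havg : (avg b (insert ms (L₁ ∪ L₂))).1 ≤ B.1 := by nlinarith
              exact insert_avg_le_fst b (L₁ ∪ L₂) hUne ms hmU havg
            have hv2 : (b ms).2 ≤ B.2 := by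
              have dev := hNE.2 (insert ms L₂)
              have hii : L₁ ∩ (insert ms L₂) = L₁ ∩ L₂ :=
                Finset.inter_insert_of_notMem hm1
              have huu : L₁ ∪ (insert ms L₂) = insert ms (L₁ ∪ L₂) :=
                Finset.union_insert ms L₁ L₂
              rw [SAout_inter b δ (by rw [hii]; exact hI), hii, huu, blend_snd,
                ← ho, ho2] at dev
              have havg : (avg b (insert ms (L₁ ∪ L₂))).2 ≤ B.2 := by nlinarith
              exact insert_avg_le_snd b (L₁ ∪ L₂) hUne ms hmU havg
            have hBA1 : A.1 + δ < B.1 := by nlinarith [h1, ho1, hv1]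
            have hBA2 : A.2 + δ < B.2 := by nlinarith [h2, ho2, hv2]
            by_cases hP : (L₁ \ L₂).Nonempty
            · have dev := hNE.1 (L₁ \ L₂)
              have hii : (L₁ \ L₂) ∩ L₂ = ∅ := Finset.sdiff_inter_self L₂ L₁
              have huu : (L₁ \ L₂) ∪ L₂ = L₁ ∪ L₂ := Finset.sdiff_union_self_eq_union
              rw [SAout_disj b δ hii (by rw [huu]; exact hUne), huu, ← hB, ← ho, ho1] at dev
              nlinarith
            · by_cases hQ : (L₂ \ L₁).Nonempty
              · have dev := hNE.2 (L₂ \ L₁)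
                have hii : L₁ ∩ (L₂ \ L₁) = ∅ := Finset.inter_sdiff_self L₁ L₂
                have huu : L₁ ∪ (L₂ \ L₁) = L₁ ∪ L₂ := Finset.union_sdiff_self_eq_union
                rw [SAout_disj b δ hii (by rw [huu]; exact hUne), huu, ← hB, ← ho, ho2] at dev
                nlinarith
              · have hs1 : L₁ ⊆ L₂ := by
                  rw [← Finset.sdiff_eq_empty_iff_subset]
                  exact Finset.not_nonempty_iff_eq_empty.mp hP
                have hs2 : L₂ ⊆ L₁ := by
                  rw [← Finset.sdiff_eq_empty_iff_subset]
                  exact Finset.not_nonempty_iff_eq_empty.mp hQ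
                have heq : L₁ = L₂ := Finset.Subset.antisymm hs1 hs2
                have : A = B := by
                  rw [hA, hB, heq, Finset.inter_self, Finset.union_self]
                rw [this] at hBA1
                linarith
          · -- disjoint equilibrium
            have hIe : L₁ ∩ L₂ = ∅ := Finset.not_nonempty_iff_eq_empty.mp hI
            have hoB : o = avg b (L₁ ∪ L₂) := SAout_disj b δ hIe hUne
            have dev := hNE.1 (insert ms L₁)
            have hii : (insert ms L₁) ∩ L₂ = ∅ := by
              rw [Finset.insert_inter_of_notMem hm2]; exact hIe
            have huu : (insert ms L₁) ∪ L₂ = insert ms (L₁ ∪ L₂) :=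
              Finset.insert_union ms L₁ L₂
            rw [SAout_disj b δ hii (by rw [huu]; exact Finset.insert_nonempty _ _),
              huu, ← ho] at dev
            rw [hoB] at dev
            have := insert_avg_le_fst b (L₁ ∪ L₂) hUne ms hmU dev
            rw [← hoB] at this
            linarith

end Part2

/-- The game `Γ_{SA_δ}` over the collection `k-UN(A)` admits a pure Nash
equilibrium, and every pure Nash equilibrium outcome is `(δ + 1/k)`-close to the
Pareto frontier of `A`. -/
theorem SA_kUN_close_to_pareto_frontier
    (n : ℕ) (hn : 1 ≤ n) (a : Fin n → ℝ × ℝ)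
    (ha : ∀ j, (a j).1 ∈ Set.Icc (0:ℝ) 1 ∧ (a j).2 ∈ Set.Icc (0:ℝ) 1)
    (k : ℕ) (hk : 1 ≤ k) (δ : ℝ) (hδ0 : 0 < δ) (hδ1 : δ ≤ 1) :
    (∃ L₁ L₂ : Finset (Sym (Fin n) k), IsPureNE (kUNColl a k) δ L₁ L₂) ∧
    (∀ L₁ L₂ : Finset (Sym (Fin n) k), IsPureNE (kUNColl a k) δ L₁ L₂ →
      ¬ ∃ y ∈ convexHull ℝ (Set.range a),
        y.1 > (SAout (kUNColl a k) δ L₁ L₂).1 + δ + 1 / k ∧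
        y.2 > (SAout (kUNColl a k) δ L₁ L₂).2 + δ + 1 / k) := by
  haveI : Nonempty (Sym (Fin n) k) := ⟨Sym.replicate k ⟨0, by omega⟩⟩
  set b := kUNColl a k with hbdef
  have hb : ∀ m, (0 ≤ (b m).1 ∧ (b m).1 ≤ 1) ∧ (0 ≤ (b m).2 ∧ (b m).2 ≤ 1) :=
    fun m => kUN_bounds a ha k hk m
  constructor
  · exact exists_NE b δ (le_of_lt hδ0) hδ1
  · intro L₁ L₂ hNE
    rintro ⟨y, hy, hy1, hy2⟩
    set o := SAout b δ L₁ L₂ with ho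
    have ho1 : 0 ≤ o.1 := SAout_fst_nonneg b δ (fun m => ((hb m).1).1) (le_of_lt hδ0) hδ1 L₁ L₂
    have ho2 : 0 ≤ o.2 := SAout_snd_nonneg b δ (fun m => ((hb m).2).1) (le_of_lt hδ0) hδ1 L₁ L₂
    have hkpos : (0:ℝ) < k := by exact_mod_cast hk
    have h1k : (0:ℝ) < 1 / k := by positivity
    have hrange : Set.range a = ((Finset.univ.image a : Finset (ℝ × ℝ)) : Set (ℝ × ℝ)) := by
      rw [Finset.coe_image, Finset.coe_univ, Set.image_univ]
    rw [hrange] at hy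
    obtain ⟨p', hp', q', hq', μ, hμ0, hμ1, hd1, hd2⟩ := segdom _ y hy
    obtain ⟨pi, -, rfl⟩ := Finset.mem_image.mp hp'
    obtain ⟨qi, -, rfl⟩ := Finset.mem_image.mp hq'
    obtain ⟨m, hm1, hm2⟩ := kUN_round a ha k hk pi qi μ hμ0 hμ1
    have hap := ha pi
    have haq := ha qi
    obtain ⟨⟨hp10, hp11⟩, ⟨hp20, hp21⟩⟩ := hap
    obtain ⟨⟨hq10, hq11⟩, ⟨hq20, hq21⟩⟩ := haq
    have hcomb1 : μ * (a pi).1 + (1 - μ) * (a qi).1 ≤ 1 := by nlinarith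
    have hδlt : δ < 1 := by linarith
    refine NE_close b hb δ hδ0 hδlt L₁ L₂ hNE m ?_ ?_
    · rw [← ho]; linarith
    · rw [← ho]; linarith
end

section
/- For every collection a : Fin n → [0,1]² (n ≥ 1), every weight vector w : Fin n → ℝ with w_k > 0 for all k, and every 0 < δ ≤ 1, the weighted satisfactory-alternatives game Γ_{SA_δ^w}(A) admits a pure Nash equilibrium, and every pure Nash equilibrium outcome (o₁, o₂) is δ-Pareto efficient, i.e., there is no index k with a^k_1 > o₁ + δ and a^k_2 > o₂ + δ. -/
open Finset

attribute [local instance] Classical.propDecidable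

/-- Weighted average of the alternatives over a finite set of indices. -/
noncomputable def wavg {n : ℕ} (a : Fin n → ℝ × ℝ) (w : Fin n → ℝ)
    (S : Finset (Fin n)) : ℝ × ℝ :=
  (∑ i ∈ S, w i)⁻¹ • ∑ i ∈ S, w i • a i

/-- The expected pair of payoffs in the weighted satisfactory-alternatives
mechanism `SA_δ^w` when the players submit the sets `L₁`, `L₂`. -/
noncomputable def SAwout {n : ℕ} (a : Fin n → ℝ × ℝ) (w : Fin n → ℝ) (δ : ℝ)
    (L₁ L₂ : Finset (Fin n)) : ℝ × ℝ :=
  if L₁ ∩ L₂ = ∅ then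
    (if L₁ ∪ L₂ = ∅ then wavg a w Finset.univ else wavg a w (L₁ ∪ L₂))
  else (1 - δ) • wavg a w (L₁ ∩ L₂) + δ • wavg a w (L₁ ∪ L₂)

/-- `(L₁, L₂)` is a pure Nash equilibrium of the game `Γ_{SA_δ^w}(A)`. -/
def IsPureNEw {n : ℕ} (a : Fin n → ℝ × ℝ) (w : Fin n → ℝ) (δ : ℝ)
    (L₁ L₂ : Finset (Fin n)) : Prop :=
  (∀ L₁' : Finset (Fin n), (SAwout a w δ L₁' L₂).1 ≤ (SAwout a w δ L₁ L₂).1) ∧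
  (∀ L₂' : Finset (Fin n), (SAwout a w δ L₁ L₂').2 ≤ (SAwout a w δ L₁ L₂).2)

section AuxAv
variable {n : ℕ}

/-- scalar weighted average -/
noncomputable def av (w v : Fin n → ℝ) (S : Finset (Fin n)) : ℝ :=
  (∑ i ∈ S, w i)⁻¹ * ∑ i ∈ S, w i * v i

variable {w : Fin n → ℝ}

lemma sumw_pos (hw : ∀ k, 0 < w k) {S : Finset (Fin n)} (hS : S.Nonempty) :
    0 < ∑ i ∈ S, w i :=
  Finset.sum_pos (fun i _ => hw i) hS

lemma esum_eq {v : Fin n → ℝ} {S : Finset (Fin n)} (α : ℝ) :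
    ∑ i ∈ S, w i * (v i - α) = (∑ i ∈ S, w i * v i) - (∑ i ∈ S, w i) * α := by
  rw [Finset.sum_mul, ← Finset.sum_sub_distrib]
  congr 1 with i
  ring

lemma av_le_iff (hw : ∀ k, 0 < w k) {v : Fin n → ℝ} {S : Finset (Fin n)}
    (hS : S.Nonempty) {α : ℝ} :
    av w v S ≤ α ↔ ∑ i ∈ S, w i * (v i - α) ≤ 0 := by
  have hW := sumw_pos hw hS
  rw [av, inv_mul_le_iff₀ hW, esum_eq, sub_nonpos, mul_comm]

lemma le_av_iff (hw : ∀ k, 0 < w k) {v : Fin n → ℝ} {S : Finset (Fin n)}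
    (hS : S.Nonempty) {α : ℝ} :
    α ≤ av w v S ↔ 0 ≤ ∑ i ∈ S, w i * (v i - α) := by
  have hW := sumw_pos hw hS
  rw [av, le_inv_mul_iff₀ hW, esum_eq, sub_nonneg, mul_comm]

lemma lt_av_iff (hw : ∀ k, 0 < w k) {v : Fin n → ℝ} {S : Finset (Fin n)}
    (hS : S.Nonempty) {α : ℝ} :
    α < av w v S ↔ 0 < ∑ i ∈ S, w i * (v i - α) := by
  constructor
  · intro h
    by_contra hc
    exact absurd ((av_le_iff hw hS).mpr (not_lt.mp hc)) (not_le.mpr h)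
  · intro h
    by_contra hc
    exact absurd ((av_le_iff hw hS).mp (not_lt.mp hc)) (not_le.mpr h)

lemma esum_self (hw : ∀ k, 0 < w k) {v : Fin n → ℝ} {S : Finset (Fin n)}
    (hS : S.Nonempty) :
    ∑ i ∈ S, w i * (v i - av w v S) = 0 := by
  have hW := (sumw_pos hw hS).ne'
  rw [esum_eq, av]
  field_simp
  ring

lemma av_le_of_forall (hw : ∀ k, 0 < w k) {v : Fin n → ℝ} {S : Finset (Fin n)}
    (hS : S.Nonempty) {m : ℝ} (h : ∀ k ∈ S, v k ≤ m) : av w v S ≤ m := by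
  refine (av_le_iff hw hS).mpr (Finset.sum_nonpos fun i hi => ?_)
  exact mul_nonpos_of_nonneg_of_nonpos (hw i).le (sub_nonpos.mpr (h i hi))

lemma le_av_of_forall (hw : ∀ k, 0 < w k) {v : Fin n → ℝ} {S : Finset (Fin n)}
    (hS : S.Nonempty) {m : ℝ} (h : ∀ k ∈ S, m ≤ v k) : m ≤ av w v S := by
  refine (le_av_iff hw hS).mpr (Finset.sum_nonneg fun i hi => ?_)
  exact mul_nonneg (hw i).le (sub_nonneg.mpr (h i hi))

lemma av_singleton (hw : ∀ k, 0 < w k) (v : Fin n → ℝ) (k : Fin n) :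
    av w v {k} = v k := by
  have := (hw k).ne'
  rw [av, Finset.sum_singleton, Finset.sum_singleton, inv_mul_eq_div, mul_div_assoc]
  field_simp

/-- Exchange lemma: if `Un ⊇ B` is locally optimal for the average
(all elements of `Un \ B` are above average, all outside elements below),
then `Un` globally maximizes the average among supersets of `B`. -/
lemma av_exchange (hw : ∀ k, 0 < w k) {v : Fin n → ℝ} {B Un S : Finset (Fin n)}
    (hUn : Un.Nonempty) (hBU : B ⊆ Un)
    (h1 : ∀ k ∈ Un, k ∉ B → av w v Un ≤ v k)
    (h2 : ∀ k ∉ Un, v k ≤ av w v Un)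
    (hS : S.Nonempty) (hBS : B ⊆ S) : av w v S ≤ av w v Un := by
  set α := av w v Un with hα
  refine (av_le_iff hw hS).mpr ?_
  have hsplit : ∑ i ∈ S ∩ Un, (fun i => w i * (v i - α)) i
      + ∑ i ∈ S \ Un, (fun i => w i * (v i - α)) i = ∑ i ∈ S, w i * (v i - α) :=
    Finset.sum_inter_add_sum_sdiff S Un _
  have hdiff : ∑ i ∈ S \ Un, w i * (v i - α) ≤ 0 := by
    refine Finset.sum_nonpos fun i hi => ?_
    have := h2 i (Finset.mem_sdiff.mp hi).2
    exact mul_nonpos_of_nonneg_of_nonpos (hw i).le (sub_nonpos.mpr this)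
  have hinter : ∑ i ∈ S ∩ Un, w i * (v i - α) ≤ ∑ i ∈ Un, w i * (v i - α) := by
    refine Finset.sum_le_sum_of_subset_of_nonneg Finset.inter_subset_right ?_
    intro i hi hni
    have hiB : i ∉ B := fun hB => hni (Finset.mem_inter.mpr ⟨hBS hB, hBU hB⟩)
    exact mul_nonneg (hw i).le (sub_nonneg.mpr (h1 i hi hiB))
  have hz : ∑ i ∈ Un, w i * (v i - α) = 0 := esum_self hw hUn
  simp only at hsplit
  linarith

/-- removing a below-average element does not decrease the average -/
lemma av_le_erase (hw : ∀ k, 0 < w k) {v : Fin n → ℝ} {S : Finset (Fin n)} {k : Fin n}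
    (hk : k ∈ S) (hne : (S.erase k).Nonempty) (h : v k ≤ av w v S) :
    av w v S ≤ av w v (S.erase k) := by
  set α := av w v S with hα
  refine (le_av_iff hw hne).mpr ?_
  have hsplit : ∑ i ∈ S.erase k, w i * (v i - α) + w k * (v k - α)
      = ∑ i ∈ S, w i * (v i - α) :=
    Finset.sum_erase_add S _ hk
  have hz : ∑ i ∈ S, w i * (v i - α) = 0 := esum_self hw ⟨k, hk⟩
  nlinarith [(hw k).le, sub_nonpos.mpr h]

/-- inserting a strictly-above-average element strictly increases the average -/
lemma av_lt_insert (hw : ∀ k, 0 < w k) {v : Fin n → ℝ} {S : Finset (Fin n)} {k : Fin n}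
    (hS : S.Nonempty) (hk : k ∉ S) (h : av w v S < v k) :
    av w v S < av w v (insert k S) := by
  set α := av w v S with hα
  refine (lt_av_iff hw (hS.mono (Finset.subset_insert k S))).mpr ?_
  rw [Finset.sum_insert hk, esum_self hw hS]
  nlinarith [hw k]

/-- inserting an element above a bar, into a set whose average is above the bar,
keeps the average above the bar -/
lemma lt_av_insert (hw : ∀ k, 0 < w k) {v : Fin n → ℝ} {S : Finset (Fin n)} {k : Fin n}
    {α : ℝ} (hS : S.Nonempty) (hk : k ∉ S) (h1 : α < av w v S) (h2 : α < v k) :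
    α < av w v (insert k S) := by
  refine (lt_av_iff hw (hS.mono (Finset.subset_insert k S))).mpr ?_
  rw [Finset.sum_insert hk]
  have := (lt_av_iff hw hS).mp h1
  nlinarith [hw k]

/-- scalar version of the outcome map -/
noncomputable def pay (w v : Fin n → ℝ) (δ : ℝ) (X Y : Finset (Fin n)) : ℝ :=
  if X ∩ Y = ∅ then
    (if X ∪ Y = ∅ then av w v Finset.univ else av w v (X ∪ Y))
  else (1 - δ) * av w v (X ∩ Y) + δ * av w v (X ∪ Y)

lemma wavg_fst (a : Fin n → ℝ × ℝ) (w : Fin n → ℝ) (S : Finset (Fin n)) :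
    (wavg a w S).1 = av w (fun k => (a k).1) S := by
  rw [wavg, av]
  have : (∑ i ∈ S, w i • a i).1 = ∑ i ∈ S, w i * (a i).1 := by
    rw [Prod.fst_sum]; rfl
  simp only [Prod.smul_fst, smul_eq_mul, this]

lemma wavg_snd (a : Fin n → ℝ × ℝ) (w : Fin n → ℝ) (S : Finset (Fin n)) :
    (wavg a w S).2 = av w (fun k => (a k).2) S := by
  rw [wavg, av]
  have : (∑ i ∈ S, w i • a i).2 = ∑ i ∈ S, w i * (a i).2 := by
    rw [Prod.snd_sum]; rfl
  simp only [Prod.smul_snd, smul_eq_mul, this]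

lemma SAwout_fst (a : Fin n → ℝ × ℝ) (w : Fin n → ℝ) (δ : ℝ) (L₁ L₂ : Finset (Fin n)) :
    (SAwout a w δ L₁ L₂).1 = pay w (fun k => (a k).1) δ L₁ L₂ := by
  rw [SAwout, pay]
  by_cases h : L₁ ∩ L₂ = ∅ <;> simp only [h, if_true, if_false, ite_true, ite_false]
  · by_cases h2 : L₁ ∪ L₂ = ∅ <;> simp [h, h2, wavg_fst]
  · simp [h, wavg_fst]

lemma SAwout_snd (a : Fin n → ℝ × ℝ) (w : Fin n → ℝ) (δ : ℝ) (L₁ L₂ : Finset (Fin n)) :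
    (SAwout a w δ L₁ L₂).2 = pay w (fun k => (a k).2) δ L₂ L₁ := by
  rw [SAwout, pay, Finset.inter_comm L₂ L₁, Finset.union_comm L₂ L₁]
  by_cases h : L₁ ∩ L₂ = ∅ <;> simp only [h, if_true, if_false, ite_true, ite_false]
  · by_cases h2 : L₁ ∪ L₂ = ∅ <;> simp [h, h2, wavg_snd]
  · simp [h, wavg_snd]

/-- the key sufficient condition for one player to be best-responding -/
lemma pay_side_opt (hw : ∀ k, 0 < w k) {δ : ℝ} (hδ0 : 0 ≤ δ) (hδ1 : δ ≤ 1)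
    {v : Fin n → ℝ} {A B : Finset (Fin n)} (hU : (A ∪ B).Nonempty) {m : ℝ}
    (h1 : ∀ k ∈ A ∪ B, k ∉ B → av w v (A ∪ B) ≤ v k)
    (h2 : ∀ k ∉ A ∪ B, v k ≤ av w v (A ∪ B))
    (h3 : ∀ k ∈ B, v k ≤ m)
    (hm : (A ∩ B = ∅ ∧ m = av w v (A ∪ B)) ∨
      ((A ∩ B).Nonempty ∧ av w v (A ∩ B) = m ∧ av w v (A ∪ B) ≤ m)) :
    ∀ A', pay w v δ A' B ≤ pay w v δ A B := by
  obtain ⟨x, hx⟩ := hU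
  have hUne : (A ∪ B).Nonempty := ⟨x, hx⟩
  have hunivne : (Finset.univ : Finset (Fin n)).Nonempty := ⟨x, Finset.mem_univ x⟩
  set α := av w v (A ∪ B) with hαdef
  have hαP : α ≤ pay w v δ A B ∧ (1 - δ) * m + δ * α ≤ pay w v δ A B := by
    rcases hm with ⟨hI, hmα⟩ | ⟨hI, hIm, hαm⟩
    · rw [pay, if_pos hI, if_neg hUne.ne_empty]
      constructor
      · exact le_refl _
      · rw [hmα]; ring_nf; exact le_refl _
    · rw [pay, if_neg hI.ne_empty, hIm]
      constructor
      · nlinarith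
      · exact le_refl _
  intro A'
  rw [pay]
  split_ifs with hJ hS
  · calc av w v Finset.univ ≤ α :=
          av_exchange hw hUne Finset.subset_union_right h1 h2 hunivne (Finset.subset_univ B)
      _ ≤ pay w v δ A B := hαP.1
  · calc av w v (A' ∪ B) ≤ α :=
          av_exchange hw hUne Finset.subset_union_right h1 h2
            (Finset.nonempty_iff_ne_empty.mpr hS) Finset.subset_union_right
      _ ≤ pay w v δ A B := hαP.1
  · have hJne : (A' ∩ B).Nonempty := Finset.nonempty_iff_ne_empty.mpr hJ
    have hSne : (A' ∪ B).Nonempty :=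
      hJne.mono (Finset.inter_subset_left.trans Finset.subset_union_left)
    have h4 : av w v (A' ∩ B) ≤ m :=
      av_le_of_forall hw hJne fun k hk => h3 k (Finset.mem_inter.mp hk).2
    have h5 : av w v (A' ∪ B) ≤ α :=
      av_exchange hw hUne Finset.subset_union_right h1 h2 hSne Finset.subset_union_right
    calc (1 - δ) * av w v (A' ∩ B) + δ * av w v (A' ∪ B)
        ≤ (1 - δ) * m + δ * α := by nlinarith
      _ ≤ pay w v δ A B := hαP.2

lemma pay_bounds (hw : ∀ k, 0 < w k) {δ : ℝ} (hδ0 : 0 ≤ δ) (hδ1 : δ ≤ 1)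
    {v : Fin n → ℝ} (hv : ∀ k, 0 ≤ v k ∧ v k ≤ 1)
    (hnn : (Finset.univ : Finset (Fin n)).Nonempty) (X Y : Finset (Fin n)) :
    0 ≤ pay w v δ X Y ∧ pay w v δ X Y ≤ 1 := by
  have hb : ∀ S : Finset (Fin n), S.Nonempty → 0 ≤ av w v S ∧ av w v S ≤ 1 := fun S hS =>
    ⟨le_av_of_forall hw hS fun k _ => (hv k).1, av_le_of_forall hw hS fun k _ => (hv k).2⟩
  rw [pay]
  split_ifs with hJ hS
  · exact hb _ hnn
  · exact hb _ (Finset.nonempty_iff_ne_empty.mpr hS)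
  · have hJne : (X ∩ Y).Nonempty := Finset.nonempty_iff_ne_empty.mpr hJ
    have hSne : (X ∪ Y).Nonempty :=
      hJne.mono (Finset.inter_subset_left.trans Finset.subset_union_left)
    obtain ⟨h1, h2⟩ := hb _ hJne
    obtain ⟨h3, h4⟩ := hb _ hSne
    constructor <;> nlinarith

end AuxAv

/-- The weighted satisfactory-alternatives mechanism `SA_δ^w` admits a pure Nash
equilibrium, and every pure Nash equilibrium outcome is `δ`-Pareto efficient. -/
theorem SAw_exists_pure_NE_and_delta_pareto_efficient
    (n : ℕ) (hn : 1 ≤ n) (a : Fin n → ℝ × ℝ)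
    (ha : ∀ k, (a k).1 ∈ Set.Icc (0:ℝ) 1 ∧ (a k).2 ∈ Set.Icc (0:ℝ) 1)
    (w : Fin n → ℝ) (hw : ∀ k, 0 < w k)
    (δ : ℝ) (hδ0 : 0 < δ) (hδ1 : δ ≤ 1) :
    (∃ L₁ L₂ : Finset (Fin n), IsPureNEw a w δ L₁ L₂) ∧
    (∀ L₁ L₂ : Finset (Fin n), IsPureNEw a w δ L₁ L₂ →
      ¬ ∃ k : Fin n, (a k).1 > (SAwout a w δ L₁ L₂).1 + δ ∧
        (a k).2 > (SAwout a w δ L₁ L₂).2 + δ) := by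
  have hNfin : Nonempty (Fin n) := Fin.pos_iff_nonempty.mp hn
  have hunivne : (Finset.univ : Finset (Fin n)).Nonempty := Finset.univ_nonempty
  set v : Fin n → ℝ := fun k => (a k).1 with hv_def
  set u : Fin n → ℝ := fun k => (a k).2 with hu_def
  have hv01 : ∀ k, 0 ≤ v k ∧ v k ≤ 1 := fun k => ⟨(ha k).1.1, (ha k).1.2⟩
  have hu01 : ∀ k, 0 ≤ u k ∧ u k ≤ 1 := fun k => ⟨(ha k).2.1, (ha k).2.2⟩
  constructor
  · -- existence of a pure Nash equilibrium
    -- Step 1: a minimal "stable" set Un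
    classical
    set 𝒮 : Finset (Finset (Fin n)) :=
      Finset.univ.filter
        (fun S => S.Nonempty ∧ ∀ k, k ∉ S → v k ≤ av w v S ∧ u k ≤ av w u S) with h𝒮def
    have huniv𝒮 : Finset.univ ∈ 𝒮 := by
      rw [h𝒮def, Finset.mem_filter]
      exact ⟨Finset.mem_univ _, hunivne, fun k hk => absurd (Finset.mem_univ k) hk⟩
    obtain ⟨Un, hUn𝒮, hmin⟩ := Finset.exists_min_image 𝒮 Finset.card ⟨_, huniv𝒮⟩
    obtain ⟨hUnne, hout⟩ := (Finset.mem_filter.mp hUn𝒮).2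
    set o₁ := av w v Un with ho₁def
    set o₂ := av w u Un with ho₂def
    have hin : ∀ k ∈ Un, o₁ ≤ v k ∨ o₂ ≤ u k := by
      intro k hk
      by_contra hc
      push_neg at hc
      obtain ⟨h1, h2⟩ := hc
      have hne : (Un.erase k).Nonempty := by
        by_contra hcc
        have heq : Un.erase k = ∅ := Finset.not_nonempty_iff_eq_empty.mp hcc
        rcases (Finset.erase_eq_empty_iff Un k).mp heq with h | h
        · exact hUnne.ne_empty h
        · have hoeq : o₁ = v k := by rw [ho₁def, h, av_singleton hw]
          rw [hoeq] at h1
          exact lt_irrefl _ h1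
      have hv' : av w v Un ≤ av w v (Un.erase k) := av_le_erase hw hk hne h1.le
      have hu' : av w u Un ≤ av w u (Un.erase k) := av_le_erase hw hk hne h2.le
      have hmem : Un.erase k ∈ 𝒮 := by
        rw [h𝒮def, Finset.mem_filter]
        refine ⟨Finset.mem_univ _, hne, fun j hj => ?_⟩
        by_cases hjUn : j ∈ Un
        · have hjk : j = k := by
            by_contra hjk
            exact hj (Finset.mem_erase.mpr ⟨hjk, hjUn⟩)
          subst hjk
          exact ⟨h1.le.trans hv', h2.le.trans hu'⟩
        · obtain ⟨hj1, hj2⟩ := hout j hjUn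
          exact ⟨hj1.trans hv', hj2.trans hu'⟩
      have hcard := hmin _ hmem
      have := Finset.card_erase_lt_of_mem hk
      omega
    -- Step 2: construct the equilibrium
    by_cases hB : (Un.filter (fun k => o₁ < v k ∧ o₂ < u k)) = ∅
    · -- Type D (disjoint) equilibrium
      have hBall : ∀ k ∈ Un, ¬(o₁ < v k ∧ o₂ < u k) := by
        intro k hk hkk
        have : k ∈ Un.filter (fun k => o₁ < v k ∧ o₂ < u k) :=
          Finset.mem_filter.mpr ⟨hk, hkk⟩
        rw [hB] at this
        exact absurd this (Finset.notMem_empty k)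
      set L₂ : Finset (Fin n) := Un.filter (fun k => o₂ ≤ u k ∧ v k ≤ o₁) with hL₂def
      set L₁ : Finset (Fin n) := Un \ L₂ with hL₁def
      have hL2 : ∀ k ∈ L₂, o₂ ≤ u k ∧ v k ≤ o₁ := fun k hk =>
        (Finset.mem_filter.mp hk).2
      have hL1 : ∀ k ∈ L₁, o₁ ≤ v k ∧ u k ≤ o₂ := by
        intro k hk
        obtain ⟨hkUn, hkL₂⟩ := Finset.mem_sdiff.mp hk
        have hnot : ¬(o₂ ≤ u k ∧ v k ≤ o₁) := fun hh =>
          hkL₂ (Finset.mem_filter.mpr ⟨hkUn, hh⟩)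
        rcases hin k hkUn with h | h
        · refine ⟨h, ?_⟩
          by_contra huk
          push_neg at huk
          have hv2 : v k ≤ o₁ := by
            by_contra hv2
            push_neg at hv2
            exact hBall k hkUn ⟨hv2, huk⟩
          exact hnot ⟨huk.le, hv2⟩
        · have hv2 : o₁ < v k := by
            by_contra hv2
            push_neg at hv2
            exact hnot ⟨h, hv2⟩
          refine ⟨hv2.le, ?_⟩
          by_contra huk
          push_neg at huk
          exact hBall k hkUn ⟨hv2, huk⟩
      have hUeq : L₁ ∪ L₂ = Un := Finset.sdiff_union_of_subset (Finset.filter_subset _ _)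
      have hUeq' : L₂ ∪ L₁ = Un := by rw [Finset.union_comm]; exact hUeq
      have hIeq : L₁ ∩ L₂ = ∅ := by
        rw [hL₁def]; exact Finset.sdiff_inter_self _ _
      have hIeq' : L₂ ∩ L₁ = ∅ := by rw [Finset.inter_comm]; exact hIeq
      refine ⟨L₁, L₂, ?_, ?_⟩
      · intro L₁'
        rw [SAwout_fst, SAwout_fst]
        refine pay_side_opt hw hδ0.le hδ1 (hUeq ▸ hUnne) (m := o₁) ?_ ?_ ?_ ?_ L₁'
        · intro k hk hkL₂
          rw [hUeq] at hk ⊢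
          exact (hL1 k (Finset.mem_sdiff.mpr ⟨hk, hkL₂⟩)).1
        · intro k hk
          rw [hUeq] at hk ⊢
          exact (hout k hk).1
        · exact fun k hk => (hL2 k hk).2
        · exact Or.inl ⟨hIeq, by rw [hUeq]⟩
      · intro L₂'
        rw [SAwout_snd, SAwout_snd]
        refine pay_side_opt hw hδ0.le hδ1 (hUeq' ▸ hUnne) (m := o₂) ?_ ?_ ?_ ?_ L₂'
        · intro k hk hkL₁
          rw [hUeq'] at hk ⊢
          have hkL₂ : k ∈ L₂ := by
            rcases Finset.mem_union.mp (hUeq' ▸ hk : k ∈ L₂ ∪ L₁) with h | h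
            · exact h
            · exact absurd h hkL₁
          exact (hL2 k hkL₂).1
        · intro k hk
          rw [hUeq'] at hk ⊢
          exact (hout k hk).2
        · exact fun k hk => (hL1 k hk).2
        · exact Or.inl ⟨hIeq', by rw [hUeq']⟩
    · -- Type I (intersecting) equilibrium
      have hBne : (Un.filter (fun k => o₁ < v k ∧ o₂ < u k)).Nonempty :=
        Finset.nonempty_iff_ne_empty.mpr hB
      obtain ⟨k₀, hk₀B, hk₀max⟩ := Finset.exists_max_image _ v hBne
      obtain ⟨hk₀Un, hk₀v, hk₀u⟩ : k₀ ∈ Un ∧ o₁ < v k₀ ∧ o₂ < u k₀ := by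
        obtain ⟨h1, h2⟩ := Finset.mem_filter.mp hk₀B
        exact ⟨h1, h2⟩
      set E : Finset (Fin n) := Un.erase k₀ with hEdef
      set D₁ : Finset (Fin n) := E.filter (fun k => o₁ ≤ v k ∧ u k ≤ u k₀) with hD₁def
      set D₂ : Finset (Fin n) := E \ D₁ with hD₂def
      set L₁ : Finset (Fin n) := insert k₀ D₁ with hL₁def
      set L₂ : Finset (Fin n) := insert k₀ D₂ with hL₂def
      have hD1 : ∀ k ∈ D₁, o₁ ≤ v k ∧ u k ≤ u k₀ := fun k hk =>
        (Finset.mem_filter.mp hk).2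
      have hD2 : ∀ k ∈ D₂, o₂ ≤ u k ∧ v k ≤ v k₀ := by
        intro k hk
        obtain ⟨hkE, hkD₁⟩ := Finset.mem_sdiff.mp hk
        obtain ⟨hkne, hkUn⟩ := Finset.mem_erase.mp hkE
        have hnot : ¬(o₁ ≤ v k ∧ u k ≤ u k₀) := fun hh =>
          hkD₁ (Finset.mem_filter.mpr ⟨hkE, hh⟩)
        by_cases hvk : o₁ ≤ v k
        · have huk : u k₀ < u k := by
            by_contra huk
            push_neg at huk
            exact hnot ⟨hvk, huk⟩
          refine ⟨(hk₀u.trans huk).le, ?_⟩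
          by_contra hvv
          push_neg at hvv
          have hkB : k ∈ Un.filter (fun k => o₁ < v k ∧ o₂ < u k) :=
            Finset.mem_filter.mpr ⟨hkUn, hk₀v.trans hvv, hk₀u.trans huk⟩
          exact absurd (hk₀max k hkB) (not_le.mpr hvv)
        · push_neg at hvk
          rcases hin k hkUn with h | h
          · exact absurd h (not_le.mpr hvk)
          · exact ⟨h, (hvk.trans hk₀v).le⟩
      have hD12 : D₁ ∪ D₂ = E := Finset.union_sdiff_of_subset (Finset.filter_subset _ _)
      have hUeq : L₁ ∪ L₂ = Un := by
        rw [hL₁def, hL₂def, Finset.insert_union, Finset.union_insert, Finset.insert_idem,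
          hD12, hEdef, Finset.insert_erase hk₀Un]
      have hUeq' : L₂ ∪ L₁ = Un := by rw [Finset.union_comm]; exact hUeq
      have hIeq : L₁ ∩ L₂ = {k₀} := by
        ext j
        simp only [hL₁def, hL₂def, Finset.mem_inter, Finset.mem_insert, Finset.mem_singleton,
          hD₂def, Finset.mem_sdiff]
        constructor
        · rintro ⟨h1 | h1, h2 | h2⟩
          · exact h1
          · exact h1
          · exact h2
          · exact absurd h1 h2.2
        · rintro rfl
          exact ⟨Or.inl rfl, Or.inl rfl⟩
      have hIeq' : L₂ ∩ L₁ = {k₀} := by rw [Finset.inter_comm]; exact hIeq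
      have hk₀L₁ : k₀ ∈ L₁ := Finset.mem_insert_self _ _
      have hk₀L₂ : k₀ ∈ L₂ := Finset.mem_insert_self _ _
      refine ⟨L₁, L₂, ?_, ?_⟩
      · intro L₁'
        rw [SAwout_fst, SAwout_fst]
        refine pay_side_opt hw hδ0.le hδ1 (hUeq ▸ hUnne) (m := v k₀) ?_ ?_ ?_ ?_ L₁'
        · intro k hk hkL₂
          rw [hUeq] at hk ⊢
          have hkne : k ≠ k₀ := fun hh => hkL₂ (hh ▸ hk₀L₂)
          have hkE : k ∈ E := Finset.mem_erase.mpr ⟨hkne, hk⟩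
          have hkD₁ : k ∈ D₁ := by
            by_contra hc
            exact hkL₂ (Finset.mem_insert.mpr (Or.inr (Finset.mem_sdiff.mpr ⟨hkE, hc⟩)))
          exact (hD1 k hkD₁).1
        · intro k hk
          rw [hUeq] at hk ⊢
          exact (hout k hk).1
        · intro k hk
          rcases Finset.mem_insert.mp hk with h | h
          · exact le_of_eq (by rw [h])
          · exact (hD2 k h).2
        · refine Or.inr ⟨by rw [hIeq]; exact Finset.singleton_nonempty _, ?_, ?_⟩
          · rw [hIeq, av_singleton hw]
          · rw [hUeq]
            exact hk₀v.le
      · intro L₂'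
        rw [SAwout_snd, SAwout_snd]
        refine pay_side_opt hw hδ0.le hδ1 (hUeq' ▸ hUnne) (m := u k₀) ?_ ?_ ?_ ?_ L₂'
        · intro k hk hkL₁
          rw [hUeq'] at hk ⊢
          have hkne : k ≠ k₀ := fun hh => hkL₁ (hh ▸ hk₀L₁)
          have hkE : k ∈ E := Finset.mem_erase.mpr ⟨hkne, hk⟩
          have hkD₂ : k ∈ D₂ := by
            by_contra hc
            have hkD₁ : k ∈ D₁ := by
              rcases Finset.mem_union.mp (hD12 ▸ hkE : k ∈ D₁ ∪ D₂) with h | h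
              · exact h
              · exact absurd h hc
            exact hkL₁ (Finset.mem_insert.mpr (Or.inr hkD₁))
          exact (hD2 k hkD₂).1
        · intro k hk
          rw [hUeq'] at hk ⊢
          exact (hout k hk).2
        · intro k hk
          rcases Finset.mem_insert.mp hk with h | h
          · exact le_of_eq (by rw [h])
          · exact (hD1 k h).2
        · refine Or.inr ⟨by rw [hIeq']; exact Finset.singleton_nonempty _, ?_, ?_⟩
          · rw [hIeq', av_singleton hw]
          · rw [hUeq']
            exact hk₀u.le
  · -- δ-Pareto efficiency of every pure Nash equilibrium
    rintro L₁ L₂ ⟨hNE1, hNE2⟩ ⟨k, hk1, hk2⟩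
    have hNE1' : ∀ L', pay w v δ L' L₂ ≤ pay w v δ L₁ L₂ := by
      intro L'
      have := hNE1 L'
      rwa [SAwout_fst, SAwout_fst] at this
    have hNE2' : ∀ L', pay w u δ L' L₁ ≤ pay w u δ L₂ L₁ := by
      intro L'
      have := hNE2 L'
      rwa [SAwout_snd, SAwout_snd] at this
    rw [SAwout_fst] at hk1
    rw [SAwout_snd] at hk2
    set p₁ := pay w v δ L₁ L₂ with hp₁def
    set p₂ := pay w u δ L₂ L₁ with hp₂def
    have hp₁b : 0 ≤ p₁ ∧ p₁ ≤ 1 := pay_bounds hw hδ0.le hδ1 hv01 hunivne L₁ L₂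
    have hp₂b : 0 ≤ p₂ ∧ p₂ ≤ 1 := pay_bounds hw hδ0.le hδ1 hu01 hunivne L₂ L₁
    have hvk1 : v k ≤ 1 := (hv01 k).2
    have huk1 : u k ≤ 1 := (hu01 k).2
    have hδlt1 : δ < 1 := by
      have : p₁ + δ < v k := hk1
      linarith [hp₁b.1]
    by_cases hkL₂ : k ∈ L₂
    · -- player 1 deviates to {k}
      have h₁ : {k} ∩ L₂ = {k} := Finset.singleton_inter_of_mem hkL₂
      have h₂ : {k} ∪ L₂ = L₂ := by
        exact Finset.union_eq_right.mpr (Finset.singleton_subset_iff.mpr hkL₂)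
      have hdev := hNE1' {k}
      rw [pay, h₁, h₂, if_neg (Finset.singleton_ne_empty k), av_singleton hw] at hdev
      have hL2av : 0 ≤ av w v L₂ :=
        le_av_of_forall hw ⟨k, hkL₂⟩ fun j _ => (hv01 j).1
      nlinarith [hp₁b.1]
    · by_cases hkL₁ : k ∈ L₁
      · -- player 2 deviates to {k}
        have h₁ : {k} ∩ L₁ = {k} := Finset.singleton_inter_of_mem hkL₁
        have h₂ : {k} ∪ L₁ = L₁ := by
          exact Finset.union_eq_right.mpr (Finset.singleton_subset_iff.mpr hkL₁)
        have hdev := hNE2' {k}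
        rw [pay, h₁, h₂, if_neg (Finset.singleton_ne_empty k), av_singleton hw] at hdev
        have hL1av : 0 ≤ av w u L₁ :=
          le_av_of_forall hw ⟨k, hkL₁⟩ fun j _ => (hu01 j).1
        nlinarith [hp₂b.1]
      · -- k outside both lists
        have hkU : k ∉ L₁ ∪ L₂ := fun h => by
          rcases Finset.mem_union.mp h with h | h
          · exact hkL₁ h
          · exact hkL₂ h
        by_cases hI : L₁ ∩ L₂ = ∅
        · by_cases hU : L₁ ∪ L₂ = ∅
          · -- both empty : deviate to {k}
            have hL₂e : L₂ = ∅ := (Finset.union_eq_empty.mp hU).2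
            have hp₁eq : p₁ = av w v Finset.univ := by
              rw [hp₁def, pay, if_pos hI, if_pos hU]
            have hdev := hNE1' {k}
            rw [pay, hL₂e, Finset.inter_empty, Finset.union_empty,
              if_pos rfl, if_neg (Finset.singleton_ne_empty k), av_singleton hw] at hdev
            linarith
          · -- disjoint, union nonempty : deviate to insert k L₁
            have hUne : (L₁ ∪ L₂).Nonempty := Finset.nonempty_iff_ne_empty.mpr hU
            have hp₁eq : p₁ = av w v (L₁ ∪ L₂) := by
              rw [hp₁def, pay, if_pos hI, if_neg hU]
            have hintr : insert k L₁ ∩ L₂ = ∅ := by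
              rw [Finset.insert_inter_of_notMem hkL₂, hI]
            have huni : insert k L₁ ∪ L₂ = insert k (L₁ ∪ L₂) := Finset.insert_union _ _ _
            have hdev := hNE1' (insert k L₁)
            rw [pay, hintr, huni, if_pos rfl,
              if_neg (Finset.insert_ne_empty _ _)] at hdev
            have := av_lt_insert hw hUne hkU (by rw [← hp₁eq]; linarith)
            linarith
        · -- intersecting case
          have hIne : (L₁ ∩ L₂).Nonempty := Finset.nonempty_iff_ne_empty.mpr hI
          have hUne : (L₁ ∪ L₂).Nonempty :=
            hIne.mono (Finset.inter_subset_left.trans Finset.subset_union_left)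
          have hp₁eq : p₁ = (1 - δ) * av w v (L₁ ∩ L₂) + δ * av w v (L₁ ∪ L₂) := by
            rw [hp₁def, pay, if_neg hI]
          -- first deviation : insert k L₁, keeps intersection
          have hintr1 : insert k L₁ ∩ L₂ = L₁ ∩ L₂ := Finset.insert_inter_of_notMem hkL₂
          have huni1 : insert k L₁ ∪ L₂ = insert k (L₁ ∪ L₂) := Finset.insert_union _ _ _
          have hdev1 := hNE1' (insert k L₁)
          rw [pay, hintr1, huni1, if_neg hI] at hdev1
          have h6 : av w v (insert k (L₁ ∪ L₂)) ≤ av w v (L₁ ∪ L₂) := by nlinarith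
          have havU : v k ≤ av w v (L₁ ∪ L₂) := by
            by_contra h
            push_neg at h
            have := av_lt_insert hw hUne hkU h
            linarith
          have hUgt : p₁ < av w v (L₁ ∪ L₂) := by linarith
          -- second deviation : insert k (L₁ \ L₂), empty intersection
          have hintr2 : insert k (L₁ \ L₂) ∩ L₂ = ∅ := by
            rw [Finset.insert_inter_of_notMem hkL₂, Finset.sdiff_inter_self]
          have huni2 : insert k (L₁ \ L₂) ∪ L₂ = insert k (L₁ ∪ L₂) := by
            rw [Finset.insert_union, Finset.sdiff_union_self_eq_union]
          have hdev2 := hNE1' (insert k (L₁ \ L₂))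
          rw [pay, hintr2, huni2, if_pos rfl,
            if_neg (Finset.insert_ne_empty _ _)] at hdev2
          have := lt_av_insert hw hUne hkU hUgt (by linarith : p₁ < v k)
          linarith
end
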